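/- arXiv:2412.20286 — 11 statements merged into one kernel-verified Lean document; each statement's English description precedes it below -/
import Mathlib

section
/- Let I be a set and, for each i ∈ I, let Bᵢ be a small category and Pᵢ : Bᵢ ⥤ Set a functor such that the zigzag relation Rᵢ induced by Pᵢ on the disjoint union ∐_{b ∈ Bᵢ} Pᵢ b is transitive (hence an equivalence relation). Then the canonical map colim(⊗ᵢ Pᵢ) ⟶ ∏_{i ∈ I} colim Pᵢ, induced componentwise by the colimit cocones, is a bijection. -/
/-!
STATEMENT 0: For a set `I` and, for each `i ∈ I`, a small category `Bᵢ` and a functor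
`Pᵢ : Bᵢ ⥤ Set` such that the zigzag relation induced by `Pᵢ` on `∐_{b ∈ Bᵢ} Pᵢ b` is
transitive, the canonical map `colim (⊗ᵢ Pᵢ) ⟶ ∏ᵢ colim Pᵢ` (induced componentwise by the
colimit cocones) is a bijection.
-/

open CategoryTheory CategoryTheory.Limits

universe u

/-- The zigzag relation induced by a `Set`-valued functor `P` on the disjoint union
`∐_{b ∈ B} P b` : `(b, x) R (b', x')` iff there are `f : b0 ⟶ b`, `g : b0 ⟶ b'` and
`x0 ∈ P b0` with `P f x0 = x` and `P g x0 = x'`. -/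
def ZigzagRel {B : Type*} [Category B] (P : B ⥤ Type*) :
    (Σ b, P.obj b) → (Σ b, P.obj b) → Prop := fun p q =>
  ∃ (b0 : B) (f : b0 ⟶ p.1) (g : b0 ⟶ q.1) (x0 : P.obj b0),
    P.map f x0 = p.2 ∧ P.map g x0 = q.2

/-- The functor `⊗ᵢ Pᵢ : ∏ᵢ Bᵢ ⥤ Set` sending `(bᵢ)ᵢ` to the product set `∏ᵢ Pᵢ bᵢ`. -/
@[simps]
def tensorPi {I : Type u} (B : I → Type u) [∀ i, SmallCategory (B i)]
    (P : ∀ i, B i ⥤ Type u) : (∀ i, B i) ⥤ Type u where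
  obj b := ∀ i, (P i).obj (b i)
  map f := TypeCat.ofHom fun x => fun i => (P i).map (f i) (x i)
  map_id b := by ext x; simp [CategoryTheory.Pi.id_apply]
  map_comp f g := by ext x; simp [CategoryTheory.Pi.comp_apply]

/-- The cocone over `⊗ᵢ Pᵢ` with point `∏ᵢ colim Pᵢ`, whose components are induced
componentwise by the colimit cocones of the `Pᵢ`. -/
@[simps]
noncomputable def tensorPiCocone {I : Type u} (B : I → Type u) [∀ i, SmallCategory (B i)]
    (P : ∀ i, B i ⥤ Type u) : Cocone (tensorPi B P) where
  pt := ∀ i, colimit (P i)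
  ι :=
    { app := fun b => TypeCat.ofHom fun x => fun i => colimit.ι (P i) (b i) (x i)
      naturality := fun b b' f => by
        ext x
        funext i
        exact ConcreteCategory.congr_hom (colimit.w (P i) (f i)) (x i) }

lemma zigzag_of_eqvGen {B : Type u} [SmallCategory B] {P : B ⥤ Type u}
    (htrans : Transitive (ZigzagRel P)) {p q : Σ b, P.obj b}
    (h : Relation.EqvGen (P.ColimitTypeRel) p q) : ZigzagRel P p q := by
  induction h with
  | rel p q h =>
    obtain ⟨f, hf⟩ := h
    exact ⟨p.1, 𝟙 p.1, f, p.2, by simp, hf.symm⟩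
  | refl p => exact ⟨p.1, 𝟙 p.1, 𝟙 p.1, p.2, by simp, by simp⟩
  | symm p q _ ih =>
    obtain ⟨b0, f, g, x0, h1, h2⟩ := ih
    exact ⟨b0, g, f, x0, h2, h1⟩
  | trans p q r _ _ ih1 ih2 => exact htrans ih1 ih2

theorem statement0 {I : Type u} (B : I → Type u) [∀ i, SmallCategory (B i)]
    (P : ∀ i, B i ⥤ Type u)
    (htrans : ∀ i, Transitive (ZigzagRel (P i))) :
    Function.Bijective (colimit.desc (tensorPi B P) (tensorPiCocone B P)) := by
  constructor
  · intro u v huv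
    obtain ⟨b, x, rfl⟩ := Types.jointly_surjective' u
    obtain ⟨b', x', rfl⟩ := Types.jointly_surjective' v
    have hcomp : ∀ i, colimit.ι (P i) (b i) (x i) = colimit.ι (P i) (b' i) (x' i) := by
      intro i
      have h1 := types_congr_hom (colimit.ι_desc (tensorPiCocone B P) b) x
      have h2 := types_congr_hom (colimit.ι_desc (tensorPiCocone B P) b') x'
      simp only [types_comp_apply] at h1 h2
      exact congrFun (h1.symm.trans (huv.trans h2)) i
    have key : ∀ i, ZigzagRel (P i) ⟨b i, x i⟩ ⟨b' i, x' i⟩ := fun i =>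
      zigzag_of_eqvGen (htrans i) (Types.colimit_eq (hcomp i))
    choose b0 f g x0 h1 h2 using key
    have e1 : colimit.ι (tensorPi B P) b0 x0 = colimit.ι (tensorPi B P) b x := by
      have hw := types_congr_hom (colimit.w (tensorPi B P) (f : b0 ⟶ b)) x0
      simp only [types_comp_apply] at hw
      have hx : (tensorPi B P).map f x0 = x := funext h1
      exact hw.symm.trans (congrArg _ hx)
    have e2 : colimit.ι (tensorPi B P) b0 x0 = colimit.ι (tensorPi B P) b' x' := by
      have hw := types_congr_hom (colimit.w (tensorPi B P) (g : b0 ⟶ b')) x0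
      simp only [types_comp_apply] at hw
      have hx : (tensorPi B P).map g x0 = x' := funext h2
      exact hw.symm.trans (congrArg _ hx)
    rw [← e1, e2]
  · intro y
    have : ∀ i, ∃ (b : B i) (x : (P i).obj b), colimit.ι (P i) b x = y i := by
      intro i
      obtain ⟨b, x, h⟩ := Types.jointly_surjective' (y i)
      exact ⟨b, x, h⟩
    choose b x hx using this
    refine ⟨colimit.ι (tensorPi B P) b x, ?_⟩
    have := types_congr_hom (colimit.ι_desc (tensorPiCocone B P) b) x
    simp only [types_comp_apply] at this
    refine this.trans ?_
    funext i
    exact hx i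
end

section
/- Let B be a small category with binary products, let F : B ⥤ C be a functor into a locally small category C that preserves binary products, and let c₁, c₂ be objects of C whose product c₁ × c₂ exists in C. Then the functor W : (F/c₁) × (F/c₂) ⥤ F/(c₁ × c₂), which sends ((b₁, z₁), (b₂, z₂)) to (b₁ × b₂, z), where z : F(b₁ × b₂) ⟶ c₁ × c₂ is the morphism whose i-th component is zᵢ ∘ F(pᵢ) (pᵢ the product projections in B, using that F(b₁ × b₂) is a product of F b₁ and F b₂), is a final functor, and V_{F, c₁ × c₂} ∘ W equals the composite of V_{F,c₁} × V_{F,c₂} with the binary product functor B × B ⥤ B. -/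
/-!
STATEMENT 1: For a small category `B` with binary products, a functor `F : B ⥤ C` into a
locally small category `C` preserving binary products, and objects `c₁, c₂` of `C` whose
product exists, the functor `W : (F/c₁) × (F/c₂) ⥤ F/(c₁ × c₂)` sending
`((b₁, z₁), (b₂, z₂))` to `(b₁ × b₂, z)` with `z` having `i`-th component `zᵢ ∘ F(pᵢ)`,
is final, and `V_{F,c₁ × c₂} ∘ W` equals the composite of `V_{F,c₁} × V_{F,c₂}` with the
binary product functor `B × B ⥤ B`.
-/

open CategoryTheory CategoryTheory.Limits Opposite

universe u v w

variable {B : Type u} [SmallCategory B] {C : Type v} [Category.{w} C]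

/-- Volger's comparison functor `W : (F/c₁) × (F/c₂) ⥤ F/(c₁ × c₂)`. -/
@[simps]
noncomputable def VolgerW [HasBinaryProducts B] (F : B ⥤ C) (c₁ c₂ : C)
    [HasBinaryProduct c₁ c₂] :
    CostructuredArrow F c₁ × CostructuredArrow F c₂ ⥤ CostructuredArrow F (c₁ ⨯ c₂) where
  obj p := CostructuredArrow.mk (Y := p.1.left ⨯ p.2.left)
    (prod.lift (F.map prod.fst ≫ p.1.hom) (F.map prod.snd ≫ p.2.hom))
  map {p q} f := CostructuredArrow.homMk (prod.map f.1.left f.2.left) (by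
    apply Limits.prod.hom_ext <;>
      simp [← Functor.map_comp_assoc, prod.map_fst, prod.map_snd])
  map_id p := by
    apply CostructuredArrow.hom_ext
    simp
  map_comp f g := by
    apply CostructuredArrow.hom_ext
    simp [prod.map_map]

theorem statement1 [HasBinaryProducts B] (F : B ⥤ C)
    [PreservesLimitsOfShape (Discrete WalkingPair) F]
    (c₁ c₂ : C) [HasBinaryProduct c₁ c₂] :
    (VolgerW F c₁ c₂).Final ∧
      VolgerW F c₁ c₂ ⋙ CostructuredArrow.proj F (c₁ ⨯ c₂) =
        (CostructuredArrow.proj F c₁).prod (CostructuredArrow.proj F c₂) ⋙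
          Functor.uncurry.obj prod.functor := by
  constructor
  · constructor
    intro d
    -- the canonical object of `d / W`
    let X₀ : StructuredArrow d (VolgerW F c₁ c₂) :=
      StructuredArrow.mk
        (Y := (CostructuredArrow.mk (d.hom ≫ prod.fst),
               CostructuredArrow.mk (d.hom ≫ prod.snd)))
        (CostructuredArrow.homMk (prod.lift (𝟙 d.left) (𝟙 d.left)) (by
          apply Limits.prod.hom_ext <;>
            simp [← Functor.map_comp_assoc]
          · erw [prod.lift_fst, ← Functor.map_comp_assoc, prod.lift_fst, F.map_id, Category.id_comp]; rfl
          · erw [prod.lift_snd, ← Functor.map_comp_assoc, prod.lift_snd, F.map_id, Category.id_comp]; rfl))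
    have key : ∀ X : StructuredArrow d (VolgerW F c₁ c₂), Nonempty (X₀ ⟶ X) := by
      intro X
      have hw := CostructuredArrow.w X.hom
      refine ⟨StructuredArrow.homMk
        (CostructuredArrow.homMk (X.hom.left ≫ prod.fst) ?_,
         CostructuredArrow.homMk (X.hom.left ≫ prod.snd) ?_) ?_⟩
      · have h := hw =≫ prod.fst
        simp [VolgerW] at h
        erw [prod.lift_fst] at h
        simp [X₀]
        erw [Functor.map_comp_assoc]
        exact h
      · have h := hw =≫ prod.snd
        simp [VolgerW] at h
        erw [prod.lift_snd] at h
        simp [X₀]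
        erw [Functor.map_comp_assoc]
        exact h
      · apply CostructuredArrow.hom_ext
        simp only [X₀]
        apply Limits.prod.hom_ext
        · exact (fun (a : d.left ⟶ X.right.1.left ⨯ X.right.2.left) => (by simp; exact prod.lift_fst _ _ :
            (prod.lift (𝟙 d.left) (𝟙 d.left) ≫ prod.map (a ≫ prod.fst)
            (a ≫ prod.snd)) ≫ prod.fst = a ≫ prod.fst)) X.hom.left
        · exact (fun (a : d.left ⟶ X.right.1.left ⨯ X.right.2.left) => (by simp; exact prod.lift_snd _ _ :
            (prod.lift (𝟙 d.left) (𝟙 d.left) ≫ prod.map (a ≫ prod.fst)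
            (a ≫ prod.snd)) ≫ prod.snd = a ≫ prod.snd)) X.hom.left
    have : Nonempty (StructuredArrow d (VolgerW F c₁ c₂)) := ⟨X₀⟩
    apply isConnected_of_zigzag
    intro j₁ j₂
    refine ⟨[X₀, j₂], ?_, ?_⟩
    · exact List.Chain.cons (Zag.of_inv (key j₁).some)
        (List.Chain.cons (Zag.of_hom (key j₂).some) List.Chain.nil)
    · rfl
  · refine CategoryTheory.Functor.ext (fun p => rfl) (fun p q f => ?_)
    simp [VolgerW, prod.functor, prod.map_map]
    erw [eqToHom_refl, eqToHom_refl, Category.id_comp, Category.comp_id, prod.map_map]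
    erw [Category.comp_id, Category.id_comp]
    exact rfl
end

section
/- Let B be a small category with binary products, let F : B ⥤ C be a functor into a locally small category C that preserves binary products, and let c₁, c₂ be objects of C whose product c₁ × c₂ exists in C. Then for any functor X : B ⥤ E into a category E with small colimits, there is an isomorphism colim(X ∘ V_{F, c₁ × c₂}) ≅ colim(X ∘ Π ∘ (V_{F,c₁} × V_{F,c₂})), where Π : B × B ⥤ B is the binary product functor and the second colimit is taken over the category (F/c₁) × (F/c₂). -/
/-!
STATEMENT 2: For a small category `B` with binary products, a functor `F : B ⥤ C` into a
locally small category `C` preserving binary products, objects `c₁, c₂` of `C` with a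
product, and any functor `X : B ⥤ E` into a category `E` with small colimits, there is an
isomorphism `colim (X ∘ V_{F, c₁ × c₂}) ≅ colim (X ∘ Π ∘ (V_{F,c₁} × V_{F,c₂}))`, where
`Π : B × B ⥤ B` is the binary product functor and the second colimit is taken over
`(F/c₁) × (F/c₂)`.
-/

open CategoryTheory CategoryTheory.Limits Opposite

universe u v w e

section
variable {B : Type u} [SmallCategory B] {C : Type v} [Category.{u} C]
    [HasBinaryProducts B] (F : B ⥤ C) (c₁ c₂ : C) [HasBinaryProduct c₁ c₂]

noncomputable def Gfun : CostructuredArrow F c₁ × CostructuredArrow F c₂ ⥤ CostructuredArrow F (c₁ ⨯ c₂) where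
  obj p := CostructuredArrow.mk
    (prod.lift (F.map prod.fst ≫ p.1.hom) (F.map prod.snd ≫ p.2.hom) :
      F.obj (p.1.left ⨯ p.2.left) ⟶ c₁ ⨯ c₂)
  map {p q} f := CostructuredArrow.homMk (prod.map f.1.left f.2.left) (by
    apply Limits.prod.hom_ext
    · simp only [CostructuredArrow.mk_hom_eq_self, Category.assoc, prod.lift_fst]
      rw [← F.map_comp_assoc, prod.map_fst, F.map_comp, Category.assoc,
        CostructuredArrow.w f.1]
    · simp only [CostructuredArrow.mk_hom_eq_self, Category.assoc, prod.lift_snd]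
      rw [← F.map_comp_assoc, prod.map_snd, F.map_comp, Category.assoc,
        CostructuredArrow.w f.2])
  map_id p := by ext; simp
  map_comp f g := by ext; simp

noncomputable def Hfun : CostructuredArrow F (c₁ ⨯ c₂) ⥤ CostructuredArrow F c₁ × CostructuredArrow F c₂ where
  obj x := (CostructuredArrow.mk (x.hom ≫ prod.fst), CostructuredArrow.mk (x.hom ≫ prod.snd))
  map f := (CostructuredArrow.homMk f.left (by
      dsimp; rw [← Category.assoc, CostructuredArrow.w f]),
    CostructuredArrow.homMk f.left (by
      dsimp; rw [← Category.assoc, CostructuredArrow.w f]))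

noncomputable def adjHG : Hfun F c₁ c₂ ⊣ Gfun F c₁ c₂ :=
  Adjunction.mkOfHomEquiv
    { homEquiv := fun x p =>
        { toFun := fun f => CostructuredArrow.homMk (prod.lift f.1.left f.2.left) (by
            apply Limits.prod.hom_ext
            · simp only [Gfun, CostructuredArrow.mk_hom_eq_self, Category.assoc, prod.lift_fst]
              erw [← F.map_comp_assoc, prod.lift_fst, CostructuredArrow.w f.1]
              simp [Hfun]
            · simp only [Gfun, CostructuredArrow.mk_hom_eq_self, Category.assoc, prod.lift_snd]
              erw [← F.map_comp_assoc, prod.lift_snd, CostructuredArrow.w f.2]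
              simp [Hfun])
          invFun := fun g =>
            (CostructuredArrow.homMk (g.left ≫ prod.fst) (by
                have h := CostructuredArrow.w g
                simp only [Gfun, CostructuredArrow.mk_hom_eq_self] at h
                simp only [Hfun, CostructuredArrow.mk_hom_eq_self, F.map_comp, Category.assoc]
                rw [← h]; simp; erw [prod.lift_fst]; exact F.map_comp_assoc _ _ _),
             CostructuredArrow.homMk (g.left ≫ prod.snd) (by
                have h := CostructuredArrow.w g
                simp only [Gfun, CostructuredArrow.mk_hom_eq_self] at h
                simp only [Hfun, CostructuredArrow.mk_hom_eq_self, F.map_comp, Category.assoc]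
                rw [← h]; simp; erw [prod.lift_snd]; exact F.map_comp_assoc _ _ _))
          left_inv := fun f => by ext <;> simp; exacts [prod.lift_fst _ _, prod.lift_snd _ _]
          right_inv := fun g => by ext; apply Limits.prod.hom_ext <;> simp; exacts [prod.lift_fst _ _, prod.lift_snd _ _] }
      homEquiv_naturality_left_symm := fun f g => by ext <;> simp [Hfun] <;> exact Category.assoc _ _ _
      homEquiv_naturality_right := fun f g => by ext; simp [Gfun]; exact (prod.lift_map _ _ _ _).symm }
end

theorem statement2 {B : Type u} [SmallCategory B] {C : Type v} [Category.{u} C]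
    [HasBinaryProducts B] (F : B ⥤ C)
    [PreservesLimitsOfShape (Discrete WalkingPair) F]
    (c₁ c₂ : C) [HasBinaryProduct c₁ c₂]
    {E : Type e} [Category.{w} E] [HasColimitsOfSize.{u, u} E] (X : B ⥤ E) :
    Nonempty
      (colimit (CostructuredArrow.proj F (c₁ ⨯ c₂) ⋙ X) ≅
        colimit
          (((CostructuredArrow.proj F c₁).prod (CostructuredArrow.proj F c₂) ⋙
              Functor.uncurry.obj prod.functor) ⋙ X)) := by
  haveI : (Gfun F c₁ c₂).Final := Functor.final_of_adjunction (adjHG F c₁ c₂)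
  let e : Gfun F c₁ c₂ ⋙ CostructuredArrow.proj F (c₁ ⨯ c₂) ≅
      (CostructuredArrow.proj F c₁).prod (CostructuredArrow.proj F c₂) ⋙
        Functor.uncurry.obj prod.functor :=
    NatIso.ofComponents (fun p => Iso.refl _) (by
      intro p q f
      simp [Gfun, Functor.uncurry, CategoryTheory.Limits.prod.functor]
      erw [Category.comp_id, Category.id_comp, prod.map_map, Category.comp_id, Category.id_comp]; rfl)
  exact ⟨(Functor.Final.colimitIso (Gfun F c₁ c₂)
      (CostructuredArrow.proj F (c₁ ⨯ c₂) ⋙ X)).symm ≪≫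
    HasColimit.isoOfNatIso ((Functor.associator _ _ _).symm ≪≫ Functor.isoWhiskerRight e X)⟩
end

section
/- Let B be a small category with pullbacks, let G : B ⥤ D be a functor into a locally small category D that preserves pullbacks, let F : B ⥤ C be any functor into a locally small category C, and fix objects c of C and d of D. Then the zigzag relation R induced by the functor P_{c,d} : F/c ⥤ Set, (b, z) ↦ D(d, G b), on the disjoint union ∐_{(b,z) ∈ F/c} D(d, G b) ≅ ∐_{b ∈ B} D(d, G b) × C(F b, c) is transitive (hence an equivalence relation), and consequently colim P_{c,d} ≅ (∐_{b ∈ B} D(d, G b) × C(F b, c)) / R. -/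
/-!
STATEMENT 3: For a small category `B` with pullbacks, a pullback-preserving functor
`G : B ⥤ D`, an arbitrary functor `F : B ⥤ C`, and objects `c` of `C`, `d` of `D`,
the zigzag relation `R` induced by the functor `P_{c,d} : F/c ⥤ Set`, `(b, z) ↦ D(d, G b)`
on the disjoint union `∐_{(b,z) ∈ F/c} D(d, G b)` is transitive (hence an equivalence
relation) and consequently `colim P_{c,d} ≅ (∐_{(b,z)} D(d, G b))/R`.
-/

open CategoryTheory CategoryTheory.Limits Opposite

universe u v w

/-- The functor `P_{c,d} : F/c ⥤ Set`, `(b, z) ↦ D(d, G b)`. -/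
noncomputable abbrev VolgerP {B : Type u} [SmallCategory B] {C : Type v} [Category.{u} C]
    {D : Type w} [Category.{u} D] (F : B ⥤ C) (G : B ⥤ D) (c : C) (d : D) :
    CostructuredArrow F c ⥤ Type u :=
  CostructuredArrow.proj F c ⋙ G ⋙ coyoneda.obj (op d)

/-- Auxiliary: two relations whose quotients identify each other's related pairs give
equivalent quotients. -/
def quotEquivOfRel {α : Sort*} {r s : α → α → Prop}
    (h1 : ∀ a b, r a b → Quot.mk s a = Quot.mk s b)
    (h2 : ∀ a b, s a b → Quot.mk r a = Quot.mk r b) : Quot r ≃ Quot s where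
  toFun := Quot.lift (Quot.mk s) h1
  invFun := Quot.lift (Quot.mk r) h2
  left_inv := Quot.ind fun _ => rfl
  right_inv := Quot.ind fun _ => rfl

theorem statement3 {B : Type u} [SmallCategory B] [HasPullbacks B]
    {C : Type v} [Category.{u} C] {D : Type w} [Category.{u} D]
    (G : B ⥤ D) [PreservesLimitsOfShape WalkingCospan G]
    (F : B ⥤ C) (c : C) (d : D) :
    Transitive (ZigzagRel (VolgerP F G c d)) ∧
      Nonempty (colimit (VolgerP F G c d) ≃ Quot (ZigzagRel (VolgerP F G c d))) := by
  set P := VolgerP F G c d with hP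
  have hmap : ∀ {a b : CostructuredArrow F c} (f : a ⟶ b) (x : P.obj a),
      P.map f x = x ≫ G.map f.left := fun _ _ => rfl
  constructor
  · rintro ⟨o1, x1⟩ ⟨o2, x2⟩ ⟨o3, x3⟩ ⟨a, f, g, x0, hf, hg⟩ ⟨a', f', g', x0', hf', hg'⟩
    let fst := pullback.fst g.left f'.left
    let snd := pullback.snd g.left f'.left
    let A : CostructuredArrow F c := CostructuredArrow.mk (F.map fst ≫ a.hom)
    have wA : F.map snd ≫ a'.hom = F.map fst ≫ a.hom := by
      rw [← CostructuredArrow.w g, ← CostructuredArrow.w f', ← F.map_comp_assoc,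
        ← F.map_comp_assoc, pullback.condition]
    let u : A ⟶ o1 := CostructuredArrow.homMk (fst ≫ f.left)
      (by simp [A, F.map_comp, CostructuredArrow.w f])
    let v : A ⟶ o3 := CostructuredArrow.homMk (snd ≫ g'.left)
      (by simp only [A, CostructuredArrow.mk_hom_eq_self, F.map_comp, Category.assoc,
        CostructuredArrow.w g']; exact wA)
    have L := isLimitOfHasPullbackOfPreservesLimit G g.left f'.left
    have hcond : x0 ≫ G.map g.left = x0' ≫ G.map f'.left := by
      rw [← hmap g x0, ← hmap f' x0', hg, hf']
    let xbar : d ⟶ G.obj (pullback g.left f'.left) :=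
      PullbackCone.IsLimit.lift L x0 x0' hcond
    have hfst : xbar ≫ G.map fst = x0 := PullbackCone.IsLimit.lift_fst L x0 x0' hcond
    have hsnd : xbar ≫ G.map snd = x0' := PullbackCone.IsLimit.lift_snd L x0 x0' hcond
    refine ⟨A, u, v, xbar, ?_, ?_⟩
    · rw [hmap u xbar]
      show xbar ≫ G.map (fst ≫ f.left) = x1
      rw [G.map_comp, ← Category.assoc, hfst]; exact (hmap f x0).symm.trans hf
    · rw [hmap v xbar]
      show xbar ≫ G.map (snd ≫ g'.left) = x3
      rw [G.map_comp, ← Category.assoc, hsnd]; exact (hmap g' x0').symm.trans hg'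
  · refine ⟨(Types.colimitEquivColimitType P).trans (quotEquivOfRel ?_ ?_)⟩
    · rintro p q ⟨f, hf⟩
      exact Quot.sound ⟨p.1, 𝟙 p.1, f, p.2, by simp, hf.symm⟩
    · rintro p q ⟨b0, f, g, x0, hf, hg⟩
      exact ((Quot.sound ⟨f, hf.symm⟩ :
        Quot.mk (Functor.ColimitTypeRel P) ⟨b0, x0⟩ = Quot.mk _ p)).symm.trans
        (Quot.sound ⟨g, hg.symm⟩)
end

section
/- Let r be an infinite regular cardinal and let S_r be a skeleton of the full subcategory of Set on sets of cardinality less than r. Then the functor given by evaluation at a one-element set, from the full subcategory of the functor category Set^{S_r^op} consisting of those functors S_r^op ⥤ Set that preserve products of families of fewer than r objects, to the category Set, is an equivalence of categories. -/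
/-!
STATEMENT 4: Let `r` be an infinite regular cardinal and `S_r` a skeleton of the full
subcategory of `Set` on sets of cardinality `< r`. Then evaluation at a one-element set,
from the full subcategory of `Set^{S_r^op}` of functors preserving products of families of
fewer than `r` objects, to `Set`, is an equivalence of categories.

We model `S_r` as a small skeletal category `S` equipped with an equivalence to the full
subcategory of `Type u` on types of cardinality `< r`, and the one-element set as an object
`one` of `S` whose underlying set has cardinality `1`.
-/

open CategoryTheory CategoryTheory.Limits Opposite

universe u

noncomputable section

namespace Statement4Aux

variable {r : Cardinal.{u}} {S : Type u} [SmallCategory S]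
  (e : S ≌ ObjectProperty.FullSubcategory (fun α : Type u => Cardinal.mk α < r))

/-- The underlying-set functor. -/
abbrev U : S ⥤ Type u := e.functor ⋙ ObjectProperty.ι _

/-- `U` is fully faithful. -/
def FF : (U e).FullyFaithful := Functor.FullyFaithful.ofFullyFaithful _

variable (one : S) [Unique ((U e).obj one)]

/-- The point of `X` corresponding to `a`. -/
def pt {X : S} (a : (U e).obj X) : one ⟶ X := (FF e).preimage (TypeCat.ofHom fun _ => a)

lemma U_map_pt {X : S} (a : (U e).obj X) (u : (U e).obj one) :
    (U e).map (pt e one a) u = a :=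
  ConcreteCategory.congr_hom ((FF e).map_preimage _) u

lemma pt_comp {X Y : S} (f : X ⟶ Y) (a : (U e).obj X) :
    pt e one a ≫ f = pt e one ((U e).map f a) := by
  apply (FF e).map_injective
  ext u
  rw [Functor.map_comp]
  show (U e).map f ((U e).map (pt e one a) u) = (U e).map (pt e one _) u
  rw [U_map_pt, U_map_pt]

lemma pt_eq_id (a : (U e).obj one) : pt e one a = 𝟙 one := by
  apply (FF e).map_injective
  ext u
  show (U e).map (pt e one a) u = (U e).map (𝟙 one) u
  rw [U_map_pt, FunctorToTypes.map_id_apply]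
  exact Subsingleton.elim _ _

/-- The fan exhibiting `op X` as a product of copies of `op one`. -/
def fan (X : S) : Cone (Discrete.functor fun _ : (U e).obj X => op one) :=
  Fan.mk (op X) (fun a => (pt e one a).op)

/-- The leg of a cone over the discrete diagram, as a morphism in `S`. -/
abbrev leg {X : S} (s : Cone (Discrete.functor fun _ : (U e).obj X => op one))
    (a : (U e).obj X) : one ⟶ s.pt.unop := (s.π.app ⟨a⟩).unop

/-- The fan is a limit fan. -/
def fanIsLimit (X : S) : IsLimit (fan e one X) where
  lift s := ((FF e).preimage (TypeCat.ofHom fun a => (U e).map (leg e one s a) default)).op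
  fac s := by
    rintro ⟨a⟩
    apply Quiver.Hom.unop_inj
    show pt e one a ≫ (FF e).preimage _ = leg e one s a
    apply (FF e).map_injective
    ext u
    rw [Functor.map_comp]
    show (U e).map ((FF e).preimage _) ((U e).map (pt e one a) u)
      = (U e).map (leg e one s a) u
    rw [U_map_pt, (FF e).map_preimage]
    show (U e).map (leg e one s a) default = (U e).map (leg e one s a) u
    have hu : (default : (U e).obj one) = u := Subsingleton.elim _ _
    rw [hu]
  uniq s m h := by
    symm
    apply Quiver.Hom.unop_inj
    apply (FF e).map_injective
    show (U e).map ((FF e).preimage _) = (U e).map m.unop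
    refine Eq.trans ((FF e).map_preimage _) ?_
    ext a
    have h' : pt e one a ≫ m.unop = leg e one s a := congrArg Quiver.Hom.unop (h ⟨a⟩)
    show (U e).map (leg e one s a) default = (U e).map m.unop a
    rw [← h']
    erw [Functor.map_comp]
    show (U e).map m.unop ((U e).map (pt e one a) default) = (U e).map m.unop a
    rw [U_map_pt]

/-- The canonical comparison map. -/
def theta (F : Sᵒᵖ ⥤ Type u) (X : S) :
    F.obj (op X) → ((U e).obj X → F.obj (op one)) :=
  fun s a => F.map (pt e one a).op s

/-- The pi-type cone over a discrete diagram of types. -/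
def piCone {J : Type u} (D : Discrete J ⥤ Type u) : Cone D where
  pt := ∀ j : J, D.obj ⟨j⟩
  π := Discrete.natTrans (fun j => TypeCat.ofHom fun x => x j.as)

/-- The pi-type cone is a limit cone. -/
def piConeIsLimit {J : Type u} (D : Discrete J ⥤ Type u) : IsLimit (piCone D) where
  lift s := TypeCat.ofHom fun x j => s.π.app ⟨j⟩ x
  fac s := by rintro ⟨j⟩; rfl
  uniq s m h := by ext x; funext j; exact ConcreteCategory.congr_hom (h ⟨j⟩) x

lemma bijective_of_isLimit {J : Type u} {D : Discrete J ⥤ Type u} (c : Cone D)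
    (hc : IsLimit c) : Function.Bijective (fun x (j : J) => c.π.app ⟨j⟩ x) :=
  (IsLimit.conePointUniqueUpToIso hc (piConeIsLimit D)).toEquiv.bijective

lemma theta_bijective (F : Sᵒᵖ ⥤ Type u) (X : S)
    (hF : PreservesLimitsOfShape (Discrete ((U e).obj X)) F) :
    Function.Bijective (theta e one F X) := by
  have hl : IsLimit (F.mapCone (fan e one X)) := isLimitOfPreserves F (fanIsLimit e one X)
  exact bijective_of_isLimit (F.mapCone (fan e one X)) hl

lemma theta_map' (F : Sᵒᵖ ⥤ Type u) {X Y : Sᵒᵖ} (g : X ⟶ Y) (s : F.obj X)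
    (a : (U e).obj Y.unop) :
    theta e one F Y.unop (F.map g s) a = theta e one F X.unop s ((U e).map g.unop a) := by
  show F.map (pt e one a).op (F.map g s) = F.map (pt e one ((U e).map g.unop a)).op s
  rw [← FunctorToTypes.map_comp_apply, ← pt_comp e one g.unop a]
  rfl

lemma theta_nat {F F' : Sᵒᵖ ⥤ Type u} (μ : F ⟶ F') (X : S) (s : F.obj (op X))
    (a : (U e).obj X) :
    theta e one F' X (μ.app (op X) s) a = μ.app (op one) (theta e one F X s a) := by
  show F'.map (pt e one a).op (μ.app (op X) s) = μ.app (op one) (F.map (pt e one a).op s)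
  exact (NatTrans.naturality_apply μ (pt e one a).op s).symm

lemma theta_one_apply (F : Sᵒᵖ ⥤ Type u) (s : F.obj (op one)) (a : (U e).obj one) :
    theta e one F one s a = s := by
  show F.map (pt e one a).op s = s
  rw [pt_eq_id, op_id, FunctorToTypes.map_id_apply]

/-- The natural transformation induced by a map on the values at `one`. -/
def mkNat (F F' : Sᵒᵖ ⥤ Type u)
    (hF' : ∀ X : S, Function.Bijective (theta e one F' X))
    (f : F.obj (op one) ⟶ F'.obj (op one)) : F ⟶ F' where
  app X := TypeCat.ofHom fun s => (Equiv.ofBijective _ (hF' X.unop)).symm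
    (fun a => f (theta e one F X.unop s a))
  naturality X Y g := by
    ext s
    show (Equiv.ofBijective _ (hF' Y.unop)).symm
        (fun a => f (theta e one F Y.unop (F.map g s) a)) =
      F'.map g ((Equiv.ofBijective _ (hF' X.unop)).symm
        (fun a => f (theta e one F X.unop s a)))
    apply (Equiv.ofBijective _ (hF' Y.unop)).injective
    rw [Equiv.apply_symm_apply]
    funext a
    show f (theta e one F Y.unop (F.map g s) a) =
      theta e one F' Y.unop
        (F'.map g ((Equiv.ofBijective _ (hF' X.unop)).symm
          (fun a => f (theta e one F X.unop s a)))) a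
    rw [theta_map' e one F g s a, theta_map' e one F' g]
    show f (theta e one F X.unop s ((U e).map g.unop a)) =
      (Equiv.ofBijective _ (hF' X.unop))
        ((Equiv.ofBijective _ (hF' X.unop)).symm
          (fun a => f (theta e one F X.unop s a))) ((U e).map g.unop a)
    rw [Equiv.apply_symm_apply]

lemma mkNat_app_one (F F' : Sᵒᵖ ⥤ Type u)
    (hF' : ∀ X : S, Function.Bijective (theta e one F' X))
    (f : F.obj (op one) ⟶ F'.obj (op one)) (s : F.obj (op one)) :
    (mkNat e one F F' hF' f).app (op one) s = f s := by
  show (Equiv.ofBijective _ (hF' one)).symm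
    (fun a => f (theta e one F one s a)) = f s
  rw [Equiv.symm_apply_eq]
  funext a
  show f (theta e one F one s a) = theta e one F' one (f s) a
  rw [theta_one_apply, theta_one_apply]

lemma closed (hr : r.IsRegular) {J : Type u} (hJ : Cardinal.mk J < r) :
    ObjectProperty.IsClosedUnderColimitsOfShape (fun α : Type u => Cardinal.mk α < r)
      (Discrete J) := by
  refine ⟨?_⟩
  rintro X ⟨h⟩
  have hc := h.isColimit
  have hF := h.prop_diag_obj
  let F := h.diag
  let c : Cocone F := Cocone.mk _ h.ι
  have hsurj : Function.Surjective (fun p : (j : J) × F.obj ⟨j⟩ => c.ι.app ⟨p.1⟩ p.2) := by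
    intro x
    obtain ⟨j, y, hy⟩ := Types.jointly_surjective F hc x
    exact ⟨⟨j.as, y⟩, hy⟩
  refine lt_of_le_of_lt (Cardinal.mk_le_of_surjective hsurj) ?_
  rw [Cardinal.mk_sigma]
  exact Cardinal.sum_lt_of_isRegular hr hJ (fun j => hF ⟨j⟩)

lemma preservesU (hr : r.IsRegular) {J : Type u} (hJ : Cardinal.mk J < r) :
    PreservesColimitsOfShape (Discrete J) (U e) := by
  have h1 : CreatesColimitsOfShape (Discrete J)
      (ObjectProperty.ι (fun α : Type u => Cardinal.mk α < r)) :=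
    haveI := closed hr hJ
    createsColimitsOfShapeFullSubcategoryInclusion _ _
  have h2 : PreservesColimitsOfShape (Discrete J)
      (ObjectProperty.ι (fun α : Type u => Cardinal.mk α < r)) :=
    preservesColimitOfShape_of_createsColimitsOfShape_and_hasColimitsOfShape _
  infer_instance

lemma G_property (hr : r.IsRegular) (A : Type u) {J : Type u} (hJ : Cardinal.mk J < r) :
    PreservesLimitsOfShape (Discrete J) ((U e).op ⋙ yoneda.obj A) := by
  have h1 : PreservesColimitsOfShape (Discrete J) (U e) := preservesU e hr hJ
  have h2 : PreservesColimitsOfShape (Discrete J)ᵒᵖ (U e) :=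
    preservesColimitsOfShape_of_equiv (Discrete.opposite J).symm _
  have h3 : PreservesLimitsOfShape (Discrete J) (U e).op :=
    preservesLimitsOfShape_op (J := Discrete J) (U e)
  infer_instance

end Statement4Aux

end

open Statement4Aux in
theorem statement4 (r : Cardinal.{u}) (hr : r.IsRegular)
    (S : Type u) [SmallCategory S] (hskel : CategoryTheory.Skeletal S)
    (e : S ≌ ObjectProperty.FullSubcategory (fun α : Type u => Cardinal.mk α < r))
    (one : S) (hone : Cardinal.mk (e.functor.obj one).obj = 1) :
    (ObjectProperty.ι
        (fun Xf : Sᵒᵖ ⥤ Type u => ∀ J : Type u, Cardinal.mk J < r →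
          PreservesLimitsOfShape (Discrete J) Xf) ⋙
      (evaluation Sᵒᵖ (Type u)).obj (op one)).IsEquivalence := by
  haveI huniq : Unique ((U e).obj one) :=
    Classical.choice ((unique_iff_subsingleton_and_nonempty _).mpr
      (Cardinal.eq_one_iff_unique.mp hone))
  constructor
  case faithful =>
    refine ⟨fun {F F'} {μ ν} h => ?_⟩
    have hEq : μ.hom.app (op one) = ν.hom.app (op one) := h
    refine ObjectProperty.hom_ext _ (NatTrans.ext ?_)
    funext X
    ext s
    apply (theta_bijective e one F'.obj X.unop
      (F'.property _ (e.functor.obj X.unop).property)).injective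
    funext a
    exact (theta_nat e one μ.hom X.unop s a).trans
      (by rw [hEq]; exact (theta_nat e one ν.hom X.unop s a).symm)
  case full =>
    refine ⟨fun {F F'} f => ?_⟩
    have hbij : ∀ X : S, Function.Bijective (theta e one F'.obj X) :=
      fun X => theta_bijective e one F'.obj X
        (F'.property _ (e.functor.obj X).property)
    refine ⟨ObjectProperty.homMk (mkNat e one F.obj F'.obj hbij f), ?_⟩
    ext s
    exact mkNat_app_one e one F.obj F'.obj hbij f s
  case essSurj =>
    refine ⟨fun A => ⟨⟨(U e).op ⋙ yoneda.obj A,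
      fun J hJ => G_property e hr A hJ⟩, ⟨?_⟩⟩⟩
    exact (TypeCat.homEquiv.trans (Equiv.funUnique ((U e).obj one) A)).toIso
end

section
/- Let r be an infinite regular cardinal and let A : S_r^op ⥤ 𝒜 be an algebraic theory of presentation rank r. Then for every set X, the left Kan extension Lan_A(X^(−)) : 𝒜 ⥤ Set of X^(−) along A preserves products of families of fewer than r objects; in particular, Lan_A(X^(−)) is an 𝒜-algebra. -/
/-!
STATEMENT 5: Let `r` be an infinite regular cardinal and `A : S_r^op ⥤ 𝒜` an algebraic
theory of presentation rank `r` (a small category `𝒜` with a bijective-on-objects functor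
`A` preserving products of families of fewer than `r` objects). Then for every set `X`, the
left Kan extension `Lan_A (X^(−)) : 𝒜 ⥤ Set` of `X^(−)` along `A` preserves products of
families of fewer than `r` objects (i.e. it is an `𝒜`-algebra).

We model `S_r` as a small skeletal category `S` equipped with an equivalence `e` to the full
subcategory of `Type u` on types of cardinality `< r`; the power functor `X^(−)` sends `m`
to the set of functions from the underlying set of `e.functor.obj m` to `X`.
-/

open CategoryTheory CategoryTheory.Limits Opposite

universe u

/-- The power functor `X^(−) : S_r^op ⥤ Set`, `m ↦ X^m`. -/
@[simps]
def powerFunctor {r : Cardinal.{u}} {S : Type u} [SmallCategory S]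
    (e : S ≌ ObjectProperty.FullSubcategory (fun α : Type u => Cardinal.mk α < r))
    (X : Type u) : Sᵒᵖ ⥤ Type u where
  obj m := (e.functor.obj m.unop).obj → X
  map f := TypeCat.ofHom (fun x => x ∘ (e.functor.map f.unop))
  map_id m := by
    ext x a
    simp
  map_comp f g := by
    ext x a
    simp

namespace St5
variable {r : Cardinal.{u}} {S : Type u} [SmallCategory S]
variable (e : S ≌ ObjectProperty.FullSubcategory (fun α : Type u => Cardinal.mk α < r))

def tr {k : S} {t : ObjectProperty.FullSubcategory (fun α : Type u => Cardinal.mk α < r)}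
    (α : k ⟶ e.inverse.obj t) : (e.functor.obj k).obj → t.obj :=
  fun z => (e.counit.app t) ((e.functor.map α) z)

def mkHom {k : S} {t : ObjectProperty.FullSubcategory (fun α : Type u => Cardinal.mk α < r)}
    (θ : (e.functor.obj k).obj → t.obj) : k ⟶ e.inverse.obj t :=
  e.unit.app k ≫ e.inverse.map (ObjectProperty.homMk (TypeCat.ofHom θ) : e.functor.obj k ⟶ t)

lemma tr_hom_eq {k : S} {t : ObjectProperty.FullSubcategory (fun α : Type u => Cardinal.mk α < r)}
    (α : k ⟶ e.inverse.obj t) :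
    tr e α = (e.functor.map α ≫ e.counit.app t : e.functor.obj k ⟶ t) := rfl

lemma tr_mk {k : S} {t : ObjectProperty.FullSubcategory (fun α : Type u => Cardinal.mk α < r)}
    (θ : (e.functor.obj k).obj → t.obj) : tr e (mkHom e θ) = θ := by
  have h : e.functor.map (mkHom e θ) ≫ e.counit.app t = (ObjectProperty.homMk (TypeCat.ofHom θ) : e.functor.obj k ⟶ t) := by
    simp [mkHom]
  rw [tr_hom_eq, h]
  rfl

lemma tr_injective {k : S} {t : ObjectProperty.FullSubcategory (fun α : Type u => Cardinal.mk α < r)} :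
    Function.Injective (tr e (k := k) (t := t)) := by
  intro α β h
  rw [tr_hom_eq, tr_hom_eq] at h
  have h2 : e.functor.map α ≫ e.counit.app t = e.functor.map β ≫ e.counit.app t := ConcreteCategory.coe_ext h
  have h3 := (cancel_mono (e.counit.app t)).mp h2
  exact e.functor.map_injective h3

lemma tr_comp {k k' : S} {t : ObjectProperty.FullSubcategory (fun α : Type u => Cardinal.mk α < r)}
    (γ : k' ⟶ k) (α : k ⟶ e.inverse.obj t) :
    tr e (γ ≫ α) = fun z => tr e α ((e.functor.map γ) z) := by
  funext z
  simp only [tr, Functor.map_comp]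
  rfl

variable (r) in
/-- small subsets of `X`. -/
def PS (X : Type u) : Type u := {u : Set X // Cardinal.mk ↥u < r}

variable {X : Type u}

def tObj (u : PS r X) : ObjectProperty.FullSubcategory (fun α : Type u => Cardinal.mk α < r) :=
  ⟨↥u.1, u.2⟩

def sObj (u : PS r X) : S := e.inverse.obj (tObj u)

/-- the canonical element of `X^(sObj u)`. -/
def xu (u : PS r X) : (e.functor.obj (sObj e u)).obj → X :=
  fun z => ((e.counit.app (tObj u)) z).val

lemma xu_tr {u : PS r X} {k : S} (α : k ⟶ sObj e u) (z : (e.functor.obj k).obj) :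
    xu e u ((e.functor.map α) z) = (tr e α z).val := rfl

/-- cancellation: maps into `sObj u` are determined by `xu`. -/
lemma xu_cancel {u : PS r X} {k : S} (α β : k ⟶ sObj e u)
    (h : ∀ z, xu e u ((e.functor.map α) z) = xu e u ((e.functor.map β) z)) : α = β := by
  apply tr_injective e
  funext z
  exact Subtype.ext (h z)

/-- inclusion morphism between supports. -/
def psi {u v : PS r X} (h : u.1 ⊆ v.1) : sObj e u ⟶ sObj e v :=
  mkHom e (fun z => ⟨xu e u z, h ((e.counit.app (tObj u)) z).2⟩)

lemma xu_psi {u v : PS r X} (h : u.1 ⊆ v.1) (z : (e.functor.obj (sObj e u)).obj) :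
    xu e v ((e.functor.map (psi e h)) z) = xu e u z := by
  rw [xu_tr, psi]
  erw [tr_mk]

lemma psi_refl (u : PS r X) : psi e (subset_refl u.1) = 𝟙 (sObj e u) := by
  apply xu_cancel e
  intro z
  rw [xu_psi, CategoryTheory.Functor.map_id]
  rfl

lemma psi_trans {u v w : PS r X} (h1 : u.1 ⊆ v.1) (h2 : v.1 ⊆ w.1) :
    psi e h1 ≫ psi e h2 = psi e (h1.trans h2) := by
  apply xu_cancel e
  intro z
  rw [Functor.map_comp]
  show xu e w ((e.functor.map (psi e h2)) ((e.functor.map (psi e h1)) z)) = _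
  rw [xu_psi, xu_psi, xu_psi]

/-- the support of an arbitrary element `x : X^k`. -/
def rangeSet {k : S} (x : (e.functor.obj k).obj → X) : PS r X :=
  ⟨Set.range x, lt_of_le_of_lt Cardinal.mk_range_le (e.functor.obj k).property⟩

def phix {k : S} (x : (e.functor.obj k).obj → X) : k ⟶ sObj e (rangeSet e x) :=
  mkHom e (fun z => ⟨x z, Set.mem_range_self z⟩)

lemma xu_phix {k : S} (x : (e.functor.obj k).obj → X) (z : (e.functor.obj k).obj) :
    xu e (rangeSet e x) ((e.functor.map (phix e x)) z) = x z := by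
  rw [xu_tr, phix]
  erw [tr_mk]

lemma range_xu (u : PS r X) : Set.range (xu e u) = u.1 := by
  apply Set.eq_of_subset_of_subset
  · rintro _ ⟨z, rfl⟩; exact Subtype.coe_prop _
  · intro a ha
    refine ⟨(e.counitInv.app (tObj u)) ⟨a, ha⟩, ?_⟩
    have h2 : e.counitInv.app (tObj u) ≫ e.counit.app (tObj u) = 𝟙 (tObj u) :=
      e.counitIso.inv_hom_id_app (tObj u)
    have h3 := ConcreteCategory.congr_hom h2 ⟨a, ha⟩
    show ((e.counit.app (tObj u)) ((e.counitInv.app (tObj u)) ⟨a, ha⟩)).val = a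
    rw [show (e.counit.app (tObj u)) ((e.counitInv.app (tObj u)) ⟨a, ha⟩)
        = (⟨a, ha⟩ : ↥u.1) from h3]


variable {𝒜 : Type u} [SmallCategory 𝒜] (A : Sᵒᵖ ⥤ 𝒜)

/-- elements of the filtered-colimit model of the Kan extension. -/
def Elt (X : Type u) (a : 𝒜) : Type u := Σ u : PS r X, (A.obj (op (sObj e u)) ⟶ a)

def Rel (X : Type u) (a : 𝒜) (p q : Elt e A X a) : Prop :=
  ∃ (w : PS r X) (h1 : p.1.1 ⊆ w.1) (h2 : q.1.1 ⊆ w.1),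
    A.map (psi e h1).op ≫ p.2 = A.map (psi e h2).op ≫ q.2

def unionPS (hr : r.IsRegular) (u v : PS r X) : PS r X :=
  ⟨u.1 ∪ v.1, lt_of_le_of_lt (Cardinal.mk_union_le u.1 v.1)
    (Cardinal.add_lt_of_lt hr.aleph0_le u.2 v.2)⟩

lemma rel_of_psi_comp {a : 𝒜} {u w : PS r X} (h : u.1 ⊆ w.1)
    (g : A.obj (op (sObj e u)) ⟶ a) :
    Rel e A X a ⟨u, g⟩ ⟨w, A.map (psi e h).op ≫ g⟩ :=
  ⟨w, h, subset_refl _, by rw [psi_refl]; simp⟩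

lemma rel_equivalence (hr : r.IsRegular) (a : 𝒜) : Equivalence (Rel e A X a) := by
  constructor
  · intro p
    exact ⟨p.1, subset_refl _, subset_refl _, rfl⟩
  · rintro p q ⟨w, h1, h2, hw⟩
    exact ⟨w, h2, h1, hw.symm⟩
  · rintro p q s ⟨w1, h1, h2, hw⟩ ⟨w2, h3, h4, hw2⟩
    set w : PS r X := unionPS hr w1 w2 with hwdef
    have l1 : w1.1 ⊆ w.1 := Set.subset_union_left
    have l2 : w2.1 ⊆ w.1 := Set.subset_union_right
    refine ⟨w, h1.trans l1, h4.trans l2, ?_⟩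
    have e1 : psi e (h1.trans l1) = psi e h1 ≫ psi e l1 := (psi_trans e h1 l1).symm
    have e2 : psi e (h4.trans l2) = psi e h4 ≫ psi e l2 := (psi_trans e h4 l2).symm
    have e5 : psi e h2 ≫ psi e l1 = psi e h3 ≫ psi e l2 := by
      rw [psi_trans, psi_trans]
    rw [e1, e2, op_comp, op_comp, A.map_comp, A.map_comp, Category.assoc, Category.assoc,
      hw, ← Category.assoc, ← A.map_comp, ← op_comp, e5, op_comp, A.map_comp,
      Category.assoc, hw2]


section Colim

variable (X) in
noncomputable def Lan : 𝒜 ⥤ Type u := A.pointwiseLeftKanExtension (powerFunctor e X)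

/-- the canonical element of the Kan extension attached to `p : Elt`. -/
noncomputable def Phi {a : 𝒜} (p : Elt e A X a) : (Lan e X A).obj a :=
  colimit.ι (CostructuredArrow.proj A a ⋙ powerFunctor e X)
    (CostructuredArrow.mk p.2) (xu e p.1)

lemma iota_rel {a : 𝒜} {j1 j2 : CostructuredArrow A a} (h : j1 ⟶ j2)
    (x : (powerFunctor e X).obj (op j1.left.unop)) :
    colimit.ι (CostructuredArrow.proj A a ⋙ powerFunctor e X) j2
        (((CostructuredArrow.proj A a ⋙ powerFunctor e X)).map h x)
      = colimit.ι (CostructuredArrow.proj A a ⋙ powerFunctor e X) j1 x :=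
  ConcreteCategory.congr_hom (colimit.w (CostructuredArrow.proj A a ⋙ powerFunctor e X) h) x

lemma Phi_psi {a : 𝒜} {u w : PS r X} (h : u.1 ⊆ w.1) (g : A.obj (op (sObj e u)) ⟶ a) :
    Phi e A (a := a) ⟨u, g⟩ = Phi e A ⟨w, A.map (psi e h).op ≫ g⟩ := by
  have h2 := iota_rel e A
    (j1 := CostructuredArrow.mk (A.map (psi e h).op ≫ g)) (j2 := CostructuredArrow.mk g)
    (CostructuredArrow.homMk (psi e h).op rfl) (x := xu e w)
  simp only [Phi]
  rw [← h2]
  refine congrArg (colimit.ι (CostructuredArrow.proj A a ⋙ powerFunctor e X)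
    (CostructuredArrow.mk g)) (funext fun z => ?_)
  simp only [Functor.comp_map, CostructuredArrow.proj_map, CostructuredArrow.homMk_left,
    powerFunctor_map, Function.comp_apply, Quiver.Hom.unop_op]
  exact (xu_psi e h z).symm

lemma Lan_map_iota {a b : 𝒜} (f : a ⟶ b) (j : CostructuredArrow A a)
    (x : (powerFunctor e X).obj (op j.left.unop)) :
    (Lan e X A).map f
        (colimit.ι (CostructuredArrow.proj A a ⋙ powerFunctor e X) j x)
      = colimit.ι (CostructuredArrow.proj A b ⋙ powerFunctor e X)
          ((CostructuredArrow.map f).obj j) x := by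
  have h : colimit.ι (CostructuredArrow.proj A a ⋙ powerFunctor e X) j ≫
      (Lan e X A).map f
      = colimit.ι (CostructuredArrow.proj A b ⋙ powerFunctor e X)
          ((CostructuredArrow.map f).obj j) := by
    simp [Lan]
    exact colimit.ι_desc _ j
  exact ConcreteCategory.congr_hom h x

lemma Phi_natural {a b : 𝒜} (f : a ⟶ b) (p : Elt e A X a) :
    (Lan e X A).map f (Phi e A p) = Phi e A ⟨p.1, p.2 ≫ f⟩ := by
  have h2 := iota_rel e A
    (j1 := CostructuredArrow.mk (p.2 ≫ f))
    (j2 := (CostructuredArrow.map f).obj (CostructuredArrow.mk p.2))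
    (CostructuredArrow.homMk (𝟙 _) (by simp)) (x := xu e p.1)
  simp only [Phi]
  erw [Lan_map_iota, ← h2]

lemma Phi_natural' {a b : 𝒜} (f : a ⟶ b) (u : PS r X) (g : A.obj (op (sObj e u)) ⟶ a) :
    (Lan e X A).map f (Phi e A ⟨u, g⟩) = Phi e A ⟨u, g ≫ f⟩ :=
  Phi_natural e A f ⟨u, g⟩

lemma Phi_surjective {a : 𝒜} (c : (Lan e X A).obj a) :
    ∃ p : Elt e A X a, Phi e A p = c := by
  obtain ⟨j, y, hy⟩ := Types.jointly_surjective'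
    (F := CostructuredArrow.proj A a ⋙ powerFunctor e X) c
  let x : (e.functor.obj j.left.unop).obj → X := y
  let g0 : A.obj (op j.left.unop) ⟶ a := j.hom
  refine ⟨⟨rangeSet e x, A.map (phix e x).op ≫ g0⟩, ?_⟩
  have h2 := iota_rel e A
    (j1 := CostructuredArrow.mk (A.map (phix e x).op ≫ g0)) (j2 := j)
    (CostructuredArrow.homMk (phix e x).op rfl) (x := xu e (rangeSet e x))
  simp only [Phi]
  rw [← hy, ← h2]
  refine congrArg _ (funext fun z => ?_)
  simp only [Functor.comp_map, CostructuredArrow.proj_map, CostructuredArrow.homMk_left,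
    powerFunctor_map, Function.comp_apply, Quiver.Hom.unop_op]
  exact xu_phix e x z

def descCocone (a : 𝒜) : Cocone (CostructuredArrow.proj A a ⋙ powerFunctor e X) where
  pt := Quot (Rel e A X a)
  ι :=
    { app := fun j => TypeCat.ofHom fun x => Quot.mk _
        ⟨rangeSet e x, A.map (phix e x).op ≫ (j.hom : A.obj (op j.left.unop) ⟶ a)⟩
      naturality := by
        intro j1 j2 h
        ext x0
        let x : (e.functor.obj j1.left.unop).obj → X := x0
        let y : (e.functor.obj j2.left.unop).obj → X :=
          (powerFunctor e X).map h.left x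
        show Quot.mk (Rel e A X a)
            ⟨rangeSet e y, A.map (phix e y).op ≫ (j2.hom : A.obj (op j2.left.unop) ⟶ a)⟩
          = Quot.mk (Rel e A X a)
            ⟨rangeSet e x, A.map (phix e x).op ≫ (j1.hom : A.obj (op j1.left.unop) ⟶ a)⟩
        have hsub : (rangeSet e y).1 ⊆ (rangeSet e x).1 := by
          rintro _ ⟨z, rfl⟩
          exact Set.mem_range_self _
        apply Quot.sound
        refine ⟨rangeSet e x, hsub, subset_refl _, ?_⟩
        have hS : phix e y ≫ psi e hsub = h.left.unop ≫ phix e x := by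
          apply xu_cancel e
          intro z
          rw [Functor.map_comp, Functor.map_comp]
          show xu e (rangeSet e x) ((e.functor.map (psi e hsub))
              ((e.functor.map (phix e y)) z)) = xu e (rangeSet e x)
              ((e.functor.map (phix e x)) ((e.functor.map h.left.unop) z))
          rw [xu_psi, xu_phix, xu_phix]
          rfl
        rw [psi_refl]
        have hw : A.map h.left ≫ (j2.hom : A.obj (op j2.left.unop) ⟶ a)
            = (j1.hom : A.obj (op j1.left.unop) ⟶ a) := CostructuredArrow.w h
        rw [← Category.assoc, ← A.map_comp, ← op_comp, hS, op_comp, A.map_comp,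
          Category.assoc]
        simp only [Quiver.Hom.op_unop]
        rw [hw]
        simp }

noncomputable def Psi (a : 𝒜) : (Lan e X A).obj a → Quot (Rel e A X a) :=
  fun c => colimit.desc (CostructuredArrow.proj A a ⋙ powerFunctor e X) (descCocone e A a) c

lemma Psi_Phi {a : 𝒜} (p : Elt e A X a) :
    Psi e A a (Phi e A p) = Quot.mk (Rel e A X a) p := by
  have h1 : Psi e A a (Phi e A p)
      = (descCocone e A a).ι.app (CostructuredArrow.mk p.2) (xu e p.1) := by
    simp only [Phi, Psi]
    exact ConcreteCategory.congr_hom (colimit.ι_desc (descCocone e A a) (CostructuredArrow.mk p.2)) (xu e p.1)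
  rw [h1]
  show Quot.mk (Rel e A X a) ⟨rangeSet e (xu e p.1), A.map (phix e (xu e p.1)).op ≫ p.2⟩
    = Quot.mk (Rel e A X a) p
  have hsub : (rangeSet e (xu e p.1)).1 ⊆ p.1.1 := by
    rw [show (rangeSet e (xu e p.1)).1 = Set.range (xu e p.1) from rfl, range_xu]
  apply Quot.sound
  refine ⟨p.1, hsub, subset_refl _, ?_⟩
  have hS : phix e (xu e p.1) ≫ psi e hsub = 𝟙 (sObj e p.1) := by
    apply xu_cancel e
    intro z
    rw [Functor.map_comp, CategoryTheory.Functor.map_id]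
    show xu e p.1 ((e.functor.map (psi e hsub)) ((e.functor.map (phix e (xu e p.1))) z))
      = xu e p.1 (𝟙 (e.functor.obj (sObj e p.1)) z)
    rw [xu_psi, xu_phix]
    rfl
  rw [psi_refl, ← Category.assoc, ← A.map_comp, ← op_comp, hS]

lemma Phi_inj (hr : r.IsRegular) {a : 𝒜} {p q : Elt e A X a}
    (h : Phi e A p = Phi e A q) : Rel e A X a p q := by
  have h2 : Quot.mk (Rel e A X a) p = Quot.mk (Rel e A X a) q := by
    rw [← Psi_Phi e A p, ← Psi_Phi e A q, h]
  exact ((rel_equivalence e A hr a).eqvGen_iff).mp (Quot.eq.mp h2)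

end Colim
section Prod

def ctr {k : S} {t : ObjectProperty.FullSubcategory (fun α : Type u => Cardinal.mk α < r)}
    (β : e.inverse.obj t ⟶ k) : t.obj → (e.functor.obj k).obj :=
  fun z => (e.functor.map β) ((e.counitInv.app t) z)

lemma ctr_hom_eq {k : S} {t : ObjectProperty.FullSubcategory (fun α : Type u => Cardinal.mk α < r)}
    (β : e.inverse.obj t ⟶ k) :
    ctr e β = (e.counitInv.app t ≫ e.functor.map β : t ⟶ e.functor.obj k) := rfl

lemma ctr_injective {k : S} {t : ObjectProperty.FullSubcategory (fun α : Type u => Cardinal.mk α < r)} :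
    Function.Injective (ctr e (k := k) (t := t)) := by
  intro α β h
  rw [ctr_hom_eq, ctr_hom_eq] at h
  have h2 : e.counitInv.app t ≫ e.functor.map α = e.counitInv.app t ≫ e.functor.map β := ConcreteCategory.coe_ext h
  exact e.functor.map_injective ((cancel_epi (e.counitInv.app t)).mp h2)

def mkHom' {k : S} {t : ObjectProperty.FullSubcategory (fun α : Type u => Cardinal.mk α < r)}
    (θ : t.obj → (e.functor.obj k).obj) : e.inverse.obj t ⟶ k :=
  e.inverse.map (ObjectProperty.homMk (TypeCat.ofHom θ) : t ⟶ e.functor.obj k) ≫ e.unitInv.app k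

lemma ctr_mk' {k : S} {t : ObjectProperty.FullSubcategory (fun α : Type u => Cardinal.mk α < r)}
    (θ : t.obj → (e.functor.obj k).obj) : ctr e (mkHom' e θ) = θ := by
  have h : (e.counitInv.app t ≫ e.functor.map (mkHom' e θ) : t ⟶ e.functor.obj k)
      = (ObjectProperty.homMk (TypeCat.ofHom θ) : t ⟶ e.functor.obj k) := by
    simp [mkHom']
  rw [ctr_hom_eq, h]
  rfl

lemma emap_mkHom {k : S} {t : ObjectProperty.FullSubcategory (fun α : Type u => Cardinal.mk α < r)}
    (θ : (e.functor.obj k).obj → t.obj) (z : (e.functor.obj k).obj) :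
    (e.functor.map (mkHom e θ)) z = (e.counitInv.app t) (θ z) := by
  have h1 : (e.counit.app t) ((e.functor.map (mkHom e θ)) z) = θ z := congr_fun (tr_mk e θ) z
  have h2 : ∀ w : (e.functor.obj (e.inverse.obj t)).obj,
      (e.counitInv.app t) ((e.counit.app t) w) = w := by
    intro w
    exact ConcreteCategory.congr_hom (e.counitIso.hom_inv_id_app t) w
  rw [← h1, h2]

variable (hr : r.IsRegular) {J : Type u} (hJ : Cardinal.mk J < r) (M : J → Sᵒᵖ)

def sigmaObj : ObjectProperty.FullSubcategory (fun α : Type u => Cardinal.mk α < r) :=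
  ⟨Σ j, (e.functor.obj (M j).unop).obj, by
    rw [Cardinal.mk_sigma]
    exact Cardinal.sum_lt_of_isRegular hr hJ (fun j => (e.functor.obj (M j).unop).property)⟩

def nObj : S := e.inverse.obj (sigmaObj e hr hJ M)

def incl (j : J) : (M j).unop ⟶ nObj e hr hJ M :=
  mkHom e (fun z => ⟨j, z⟩)

lemma ctr_incl_comp {k : S} (β : nObj e hr hJ M ⟶ k) (j : J)
    (z : (e.functor.obj (M j).unop).obj) :
    (e.functor.map (incl e hr hJ M j ≫ β)) z = ctr e β ⟨j, z⟩ := by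
  rw [Functor.map_comp]
  show (e.functor.map β) ((e.functor.map (incl e hr hJ M j)) z) = _
  rw [incl]
  erw [emap_mkHom]
  rfl

def fanS : Fan M :=
  Fan.mk (op (nObj e hr hJ M)) (fun j => (incl e hr hJ M j).op)

def descTheta (s : Fan M) : (sigmaObj e hr hJ M).obj → (e.functor.obj s.pt.unop).obj :=
  fun w => (e.functor.map ((s.proj w.1).unop)) w.2

def fanS_isLimit : IsLimit (fanS e hr hJ M) := by
  refine mkFanLimit _ (fun s => (mkHom' e (descTheta e hr hJ M s)).op)
    (fun s j => ?_) (fun s m hm => ?_)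
  · show (mkHom' e (descTheta e hr hJ M s)).op ≫ (incl e hr hJ M j).op = s.proj j
    show (incl e hr hJ M j ≫ mkHom' e (descTheta e hr hJ M s)).op = s.proj j
    have hS : incl e hr hJ M j ≫ mkHom' e (descTheta e hr hJ M s)
        = (s.proj j).unop := by
      apply e.functor.map_injective
      refine ConcreteCategory.hom_ext _ _ fun z => ?_
      rw [show e.functor.map (incl e hr hJ M j ≫ mkHom' e (descTheta e hr hJ M s)) z
          = ctr e (mkHom' e (descTheta e hr hJ M s)) ⟨j, z⟩ from ctr_incl_comp e hr hJ M _ j z,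
        ctr_mk']
      rfl
    rw [hS]
    rfl
  · apply Quiver.Hom.unop_inj
    apply ctr_injective e
    funext w
    obtain ⟨j, z⟩ := w
    show ctr e m.unop ⟨j, z⟩ = ctr e (mkHom' e (descTheta e hr hJ M s)) ⟨j, z⟩
    rw [ctr_mk']
    have h1 : incl e hr hJ M j ≫ m.unop = (s.proj j).unop := by
      rw [← hm j]
      rfl
    rw [show (descTheta e hr hJ M s) ⟨j, z⟩
        = e.functor.map ((s.proj j).unop) z from rfl, ← h1,
      ← ctr_incl_comp e hr hJ M m.unop j z]


lemma mapFan_pi (j : J) :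
    (A.mapCone (fanS e hr hJ M)).π.app ⟨j⟩ = A.map ((incl e hr hJ M j).op) := rfl

lemma prod_unique (hlim : IsLimit (A.mapCone (fanS e hr hJ M))) {b : 𝒜}
    {g g' : b ⟶ A.obj (op (nObj e hr hJ M))}
    (h : ∀ j, g ≫ A.map ((incl e hr hJ M j).op) = g' ≫ A.map ((incl e hr hJ M j).op)) :
    g = g' := by
  refine hlim.hom_ext (fun jj => ?_)
  obtain ⟨j⟩ := jj
  rw [mapFan_pi]
  exact h j

def liftCone {b : 𝒜} (t : ∀ j, b ⟶ A.obj (M j)) :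
    Cone (Discrete.functor M ⋙ A) :=
  Cone.mk b (Discrete.natTrans (fun jj => t jj.as))

lemma prod_lift_fac (hlim : IsLimit (A.mapCone (fanS e hr hJ M))) {b : 𝒜}
    (t : ∀ j, b ⟶ A.obj (M j)) (j : J) :
    hlim.lift (liftCone A M t) ≫ A.map ((incl e hr hJ M j).op) = t j := by
  show hlim.lift (liftCone A M t) ≫ (A.mapCone (fanS e hr hJ M)).π.app ⟨j⟩ = t j
  exact hlim.fac (liftCone A M t) ⟨j⟩

variable (f : J → 𝒜) (hMf : ∀ j, A.obj (M j) = f j)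

def fanA : Fan f :=
  Fan.mk (A.obj (op (nObj e hr hJ M)))
    (fun j => A.map ((incl e hr hJ M j).op) ≫ eqToHom (hMf j))

lemma fanA_proj (j : J) : (fanA e A hr hJ M f hMf).proj j
    = A.map ((incl e hr hJ M j).op) ≫ eqToHom (hMf j) := rfl

def fanA_isLimit (hlim : IsLimit (A.mapCone (fanS e hr hJ M))) :
    IsLimit (fanA e A hr hJ M f hMf) := by
  refine mkFanLimit _
    (fun s => hlim.lift (liftCone A M (fun j => s.proj j ≫ eqToHom (hMf j).symm)))
    (fun s j => ?_) (fun s m hm => ?_)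
  · show hlim.lift (liftCone A M (fun j => s.proj j ≫ eqToHom (hMf j).symm))
      ≫ ((fanA e A hr hJ M f hMf).proj j) = s.proj j
    rw [fanA_proj]
    erw [← Category.assoc, prod_lift_fac e A hr hJ M hlim _ j]
    erw [Category.assoc,
      eqToHom_trans, eqToHom_refl, Category.comp_id]
  · apply prod_unique e A hr hJ M hlim
    intro j
    erw [prod_lift_fac e A hr hJ M hlim _ j]
    have h2 := hm j
    have h3 : (fanA e A hr hJ M f hMf).proj j
        = A.map ((incl e hr hJ M j).op) ≫ eqToHom (hMf j) := rfl
    rw [h3] at h2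
    rw [← h2]
    erw [Category.assoc, Category.assoc, eqToHom_trans, eqToHom_refl, Category.comp_id]
    rfl

def iUnionPS (p : J → PS r X) : PS r X :=
  ⟨⋃ j, (p j).1, lt_of_le_of_lt Cardinal.mk_iUnion_le_sum_mk
    (Cardinal.sum_lt_of_isRegular hr hJ (fun j => (p j).2))⟩

noncomputable def Theta (c : (Lan e X A).obj (A.obj (op (nObj e hr hJ M)))) :
    ∀ j, (Lan e X A).obj (f j) :=
  fun j => (Lan e X A).map ((fanA e A hr hJ M f hMf).proj j) c

lemma theta_surjective (hlim : IsLimit (A.mapCone (fanS e hr hJ M))) :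
    Function.Surjective (Theta e A hr hJ M f hMf (X := X)) := by
  intro t
  choose p hp using fun j => Phi_surjective e A (t j)
  set w : PS r X := iUnionPS hr hJ (fun j => (p j).1) with hw
  have hsub : ∀ j, (p j).1.1 ⊆ w.1 := fun j => Set.subset_iUnion (fun j => (p j).1.1) j
  set g' : ∀ j, A.obj (op (sObj e w)) ⟶ f j :=
    fun j => A.map (psi e (hsub j)).op ≫ (p j).2 with hg'
  set g : A.obj (op (sObj e w)) ⟶ A.obj (op (nObj e hr hJ M)) :=
    hlim.lift (liftCone A M (fun j => g' j ≫ eqToHom (hMf j).symm)) with hg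
  refine ⟨Phi e A ⟨w, g⟩, funext fun j => ?_⟩
  show (Lan e X A).map ((fanA e A hr hJ M f hMf).proj j) (Phi e A ⟨w, g⟩) = t j
  erw [Phi_natural]
  have h1 : g ≫ (fanA e A hr hJ M f hMf).proj j = g' j := by
    rw [fanA_proj, ← Category.assoc, hg]
    erw [prod_lift_fac e A hr hJ M hlim _ j]
    rw [Category.assoc, eqToHom_trans, eqToHom_refl, Category.comp_id]
  erw [h1]
  rw [← hp j]
  exact (Phi_psi e A (hsub j) (p j).2).symm

lemma theta_injective (hreg : r.IsRegular) (hlim : IsLimit (A.mapCone (fanS e hr hJ M))) :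
    Function.Injective (Theta e A hr hJ M f hMf (X := X)) := by
  intro c c' hcc
  obtain ⟨p, hp⟩ := Phi_surjective e A c
  obtain ⟨q, hq⟩ := Phi_surjective e A c'
  set w0 : PS r X := unionPS hreg p.1 q.1 with hw0
  have hsp : p.1.1 ⊆ w0.1 := Set.subset_union_left
  have hsq : q.1.1 ⊆ w0.1 := Set.subset_union_right
  set g1 : A.obj (op (sObj e w0)) ⟶ A.obj (op (nObj e hr hJ M)) :=
    A.map (psi e hsp).op ≫ p.2 with hg1
  set g1' : A.obj (op (sObj e w0)) ⟶ A.obj (op (nObj e hr hJ M)) :=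
    A.map (psi e hsq).op ≫ q.2 with hg1'
  have hc1 : c = Phi e A ⟨w0, g1⟩ := by rw [← hp]; exact Phi_psi e A hsp p.2
  have hc2 : c' = Phi e A ⟨w0, g1'⟩ := by rw [← hq]; exact Phi_psi e A hsq q.2
  have hrel : ∀ j, Rel e A X (f j) ⟨w0, g1 ≫ (fanA e A hr hJ M f hMf).proj j⟩
      ⟨w0, g1' ≫ (fanA e A hr hJ M f hMf).proj j⟩ := by
    intro j
    apply Phi_inj e A hreg
    erw [← Phi_natural' e A ((fanA e A hr hJ M f hMf).proj j) w0 g1,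
      ← Phi_natural' e A ((fanA e A hr hJ M f hMf).proj j) w0 g1', ← hc1, ← hc2]
    exact congr_fun hcc j
  choose wj hj1 hj2 heq using hrel
  set W : PS r X := unionPS hreg w0 (iUnionPS hr hJ wj) with hW
  have hw0W : w0.1 ⊆ W.1 := Set.subset_union_left
  have hwjW : ∀ j, (wj j).1 ⊆ W.1 := fun j =>
    (Set.subset_iUnion (fun j => (wj j).1) j).trans Set.subset_union_right
  have key : ∀ j, (A.map (psi e hw0W).op ≫ g1) ≫ A.map ((incl e hr hJ M j).op)
      = (A.map (psi e hw0W).op ≫ g1') ≫ A.map ((incl e hr hJ M j).op) := by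
    intro j
    have e1 : psi e hw0W = psi e (hj1 j) ≫ psi e (hwjW j) := by
      rw [psi_trans]
    have e2 : psi e hw0W = psi e (hj2 j) ≫ psi e (hwjW j) := by
      rw [psi_trans]
    have heq' : (A.map (psi e (hj1 j)).op ≫ g1 ≫ (fanA e A hr hJ M f hMf).proj j)
        ≫ eqToHom (hMf j).symm
        = (A.map (psi e (hj2 j)).op ≫ g1' ≫ (fanA e A hr hJ M f hMf).proj j)
        ≫ eqToHom (hMf j).symm := by rw [heq j]
    rw [fanA_proj] at heq'
    simp only [Category.assoc, eqToHom_trans, eqToHom_refl, Category.comp_id] at heq'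
    calc (A.map (psi e hw0W).op ≫ g1) ≫ A.map ((incl e hr hJ M j).op)
        = A.map (psi e (hwjW j)).op ≫ (A.map (psi e (hj1 j)).op ≫ g1
            ≫ A.map ((incl e hr hJ M j).op)) := by
          rw [e1, op_comp, A.map_comp]; simp only [Category.assoc]
      _ = A.map (psi e (hwjW j)).op ≫ (A.map (psi e (hj2 j)).op ≫ g1'
            ≫ A.map ((incl e hr hJ M j).op)) := by rw [heq']
      _ = (A.map (psi e hw0W).op ≫ g1') ≫ A.map ((incl e hr hJ M j).op) := by
          rw [e2, op_comp, A.map_comp]; simp only [Category.assoc]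
  have hGG : A.map (psi e hw0W).op ≫ g1 = A.map (psi e hw0W).op ≫ g1' :=
    prod_unique e A hr hJ M hlim key
  rw [hc1, hc2, Phi_psi e A hw0W g1, Phi_psi e A hw0W g1', hGG]

end Prod
end St5

open St5

theorem statement5 (r : Cardinal.{u}) (hr : r.IsRegular)
    (S : Type u) [SmallCategory S] (hskel : CategoryTheory.Skeletal S)
    (e : S ≌ ObjectProperty.FullSubcategory (fun α : Type u => Cardinal.mk α < r))
    (𝒜 : Type u) [SmallCategory 𝒜] (A : Sᵒᵖ ⥤ 𝒜)
    (hbij : Function.Bijective A.obj)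
    (hA : ∀ J : Type u, Cardinal.mk J < r → PreservesLimitsOfShape (Discrete J) A)
    (X : Type u) :
    ∀ J : Type u, Cardinal.mk J < r →
      PreservesLimitsOfShape (Discrete J)
        (A.pointwiseLeftKanExtension (powerFunctor e X)) := by
  intro J hJ
  haveI hPA : PreservesLimitsOfShape (Discrete J) A := hA J hJ
  have key : ∀ f : J → 𝒜, PreservesLimit (Discrete.functor f)
      (A.pointwiseLeftKanExtension (powerFunctor e X)) := by
    intro f
    set M : J → Sᵒᵖ := fun j => (Equiv.ofBijective A.obj hbij).symm (f j) with hMdef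
    have hMf : ∀ j, A.obj (M j) = f j :=
      fun j => (Equiv.ofBijective A.obj hbij).apply_symm_apply (f j)
    have hlim : IsLimit (A.mapCone (fanS e hr hJ M)) :=
      isLimitOfPreserves A (fanS_isLimit e hr hJ M)
    refine preservesLimit_of_preserves_limit_cone
      (fanA_isLimit e A hr hJ M f hMf hlim) ?_
    have hbijT : Function.Bijective (Theta e A hr hJ M f hMf (X := X)) :=
      ⟨theta_injective e A hr hJ M f hMf hr hlim,
        theta_surjective e A hr hJ M f hMf hlim⟩
    set E := Equiv.ofBijective _ hbijT with hE
    refine ⟨fun s => TypeCat.ofHom fun y => E.symm (fun j => s.π.app ⟨j⟩ y), ?_, ?_⟩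
    · intro s jj
      obtain ⟨j⟩ := jj
      ext y
      show ((A.pointwiseLeftKanExtension (powerFunctor e X)).mapCone
          (fanA e A hr hJ M f hMf)).π.app ⟨j⟩ (E.symm (fun j => s.π.app ⟨j⟩ y))
        = s.π.app ⟨j⟩ y
      have h1 : ((A.pointwiseLeftKanExtension (powerFunctor e X)).mapCone
          (fanA e A hr hJ M f hMf)).π.app ⟨j⟩ (E.symm (fun j => s.π.app ⟨j⟩ y))
          = E (E.symm (fun j => s.π.app ⟨j⟩ y)) j := rfl
      rw [h1]
      exact congrFun (E.apply_symm_apply _) j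
    · intro s m hm
      refine ConcreteCategory.hom_ext _ _ fun y => ?_
      apply E.injective
      funext j
      have h2 := ConcreteCategory.congr_hom (hm ⟨j⟩) y
      have h3 : E (m y) j = ((A.pointwiseLeftKanExtension (powerFunctor e X)).mapCone
          (fanA e A hr hJ M f hMf)).π.app ⟨j⟩ (m y) := rfl
      erw [h3]
      have h4 : E ((fun y => E.symm (fun j => s.π.app ⟨j⟩ y)) y) j = s.π.app ⟨j⟩ y := by
        show E (E.symm (fun j => s.π.app ⟨j⟩ y)) j = s.π.app ⟨j⟩ y
        exact congrFun (E.apply_symm_apply _) j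
      erw [h4]
      exact h2
  constructor
  intro K
  haveI := key (K.obj ∘ Discrete.mk)
  exact preservesLimit_of_iso_diagram _ (Discrete.natIsoFunctor (F := K)).symm
end

section
/- Let G : B ⥤ D be a functor with B small and D locally small. If G satisfies the Weak Pullback Condition, then for every object d of D the comma category d/G is weakly cofiltered. -/
/-!
STATEMENT 10: If a functor `G : B ⥤ D` (with `B` small, `D` locally small) satisfies the
Weak Pullback Condition, then for every object `d` of `D` the comma category `d/G` is
weakly cofiltered.
-/

open CategoryTheory CategoryTheory.Limits Opposite

universe u v w

/-- A category is weakly cofiltered if every cospan can be completed to a commutative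
square. -/
def WeaklyCofiltered (K : Type*) [Category K] : Prop :=
  ∀ ⦃b c d₀ : K⦄ (f : b ⟶ d₀) (g : c ⟶ d₀),
    ∃ (a : K) (p : a ⟶ b) (q : a ⟶ c), p ≫ f = q ≫ g

/-- A commuting square `p ≫ f = q ≫ g` in `D` is a weak pullback square if every other
commuting square on the cospan `(f, g)` factors (not necessarily uniquely) through it. -/
def IsWeakPullback {D : Type*} [Category D] {a b₁ b₂ b₀ : D}
    (p : a ⟶ b₁) (q : a ⟶ b₂) (f : b₁ ⟶ b₀) (g : b₂ ⟶ b₀) : Prop :=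
  p ≫ f = q ≫ g ∧
    ∀ ⦃e : D⦄ (h : e ⟶ b₁) (k : e ⟶ b₂), h ≫ f = k ≫ g →
      ∃ l : e ⟶ a, l ≫ p = h ∧ l ≫ q = k

/-- The Weak Pullback Condition (WPC) for a functor `G : B ⥤ D`: every cospan in `B` can
be completed to a commutative square that `G` sends to a weak pullback square in `D`. -/
def WeakPullbackCondition {B : Type*} [Category B] {D : Type*} [Category D]
    (G : B ⥤ D) : Prop :=
  ∀ ⦃b₀ b₁ b₂ : B⦄ (f : b₁ ⟶ b₀) (g : b₂ ⟶ b₀),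
    ∃ (a : B) (p : a ⟶ b₁) (q : a ⟶ b₂), p ≫ f = q ≫ g ∧
      IsWeakPullback (G.map p) (G.map q) (G.map f) (G.map g)

/-! Complete the cospan `f.right, g.right` underlying a cospan `f, g` of `d/G` by a square that `G`
sends to a weak pullback. The structure arrows `X.hom`, `Y.hom` commute over the image cospan, so
they factor through `G a`, and that factorization is the required object of `d/G`. -/

theorem WeakPullbackCondition.weaklyCofiltered_structuredArrow {B D : Type*} [Category B]
    [Category D] {G : B ⥤ D} (hG : WeakPullbackCondition G) (d : D) :
    WeaklyCofiltered (StructuredArrow d G) := by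
  intro X Y Z f g
  obtain ⟨a, p, q, hpq, -, hfactor⟩ := hG f.right g.right
  obtain ⟨l, hlp, hlq⟩ :=
    hfactor X.hom Y.hom (by rw [StructuredArrow.w f, StructuredArrow.w g])
  exact ⟨.mk l, StructuredArrow.homMk p hlp, StructuredArrow.homMk q hlq,
    StructuredArrow.hom_ext _ _ hpq⟩

theorem statement10 {B : Type u} [SmallCategory B] {D : Type w} [Category.{v} D]
    (G : B ⥤ D) (hG : WeakPullbackCondition G) (d : D) :
    WeaklyCofiltered (StructuredArrow d G) :=
  hG.weaklyCofiltered_structuredArrow d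
end

section
/- Let r be an infinite regular cardinal and let F : B ⥤ C and G : B ⥤ D be functors with B small and C, D locally small. Suppose G satisfies the Weak Pullback Condition, and suppose B has products of all families of fewer than r objects and G preserves these products. Then for every object d of D, the left Kan extension Lan_F(D(d, G −)) : C ⥤ Set of the functor b ↦ D(d, G b) along F preserves all products of families of fewer than r objects that exist in C. -/
/-!
STATEMENT 11: Let `r` be an infinite regular cardinal, `F : B ⥤ C` and `G : B ⥤ D` functors
with `B` small and `C, D` locally small. If `G` satisfies the Weak Pullback Condition, and
`B` has products of all families of fewer than `r` objects which are preserved by `G`, then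
for every object `d` of `D` the left Kan extension `Lan_F (D(d, G −)) : C ⥤ Set` preserves
all products of families of fewer than `r` objects (that exist in `C`).
-/

open CategoryTheory CategoryTheory.Limits Opposite

universe u v w

section Aux

variable {B : Type u} [SmallCategory B] {C : Type v} [Category.{u} C]
  {D : Type w} [Category.{u} D] (F : B ⥤ C) (G : B ⥤ D) (d : D)

/-- The diagram whose colimit computes the pointwise left Kan extension at `c`. -/
abbrev lanDiagram (c : C) : CostructuredArrow F c ⥤ Type u :=
  CostructuredArrow.proj F c ⋙ (G ⋙ coyoneda.obj (op d))

/-- A "span" witness between two elements of the colimit. -/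
def SpanRel {c : C} (x y : Σ g : CostructuredArrow F c, d ⟶ G.obj g.left) : Prop :=
  ∃ (a : B) (p : a ⟶ x.1.left) (q : a ⟶ y.1.left) (w : d ⟶ G.obj a),
    F.map p ≫ x.1.hom = F.map q ≫ y.1.hom ∧ w ≫ G.map p = x.2 ∧ w ≫ G.map q = y.2

theorem span_sound {c : C} (g₁ g₂ : CostructuredArrow F c)
    (u₁ : d ⟶ G.obj g₁.left) (u₂ : d ⟶ G.obj g₂.left)
    (a : B) (p : a ⟶ g₁.left) (q : a ⟶ g₂.left) (w : d ⟶ G.obj a)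
    (hcomm : F.map p ≫ g₁.hom = F.map q ≫ g₂.hom)
    (h₁ : w ≫ G.map p = u₁) (h₂ : w ≫ G.map q = u₂) :
    colimit.ι (lanDiagram F G d c) g₁ u₁ = colimit.ι (lanDiagram F G d c) g₂ u₂ := by
  let g₀ : CostructuredArrow F c := CostructuredArrow.mk (F.map p ≫ g₁.hom)
  have e₁ : colimit.ι (lanDiagram F G d c) g₀ w = colimit.ι (lanDiagram F G d c) g₁ u₁ :=
    Types.colimit_sound (CostructuredArrow.homMk p rfl) h₁
  have e₂ : colimit.ι (lanDiagram F G d c) g₀ w = colimit.ι (lanDiagram F G d c) g₂ u₂ :=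
    Types.colimit_sound (CostructuredArrow.homMk q hcomm.symm) h₂
  rw [← e₁, e₂]

theorem eqvGen_to_span (hWPC : WeakPullbackCondition G) {c : C}
    (x y : Σ g : CostructuredArrow F c, d ⟶ G.obj g.left)
    (h : Relation.EqvGen (lanDiagram F G d c).ColimitTypeRel x y) :
    SpanRel F G d x y := by
  induction h with
  | rel x y hr =>
    obtain ⟨φ, hφ⟩ := hr
    exact ⟨x.1.left, 𝟙 _, φ.left, x.2, by simpa using (CostructuredArrow.w φ).symm,
      by simp, hφ.symm⟩
  | refl x => exact ⟨x.1.left, 𝟙 _, 𝟙 _, x.2, by simp, by simp, by simp⟩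
  | symm x y _ ih =>
    obtain ⟨a, p, q, w, h1, h2, h3⟩ := ih
    exact ⟨a, q, p, w, h1.symm, h3, h2⟩
  | trans x y z _ _ ih₁ ih₂ =>
    obtain ⟨a, p, q, w, h1, h2, h3⟩ := ih₁
    obtain ⟨a', p', q', w', h1', h2', h3'⟩ := ih₂
    obtain ⟨t, m, n, hsq, hwpb⟩ := hWPC q p'
    obtain ⟨l, hl₁, hl₂⟩ := hwpb.2 w w' (by rw [h3, h2'])
    refine ⟨t, m ≫ p, n ≫ q', l, ?_, ?_, ?_⟩
    · rw [F.map_comp, F.map_comp, Category.assoc, Category.assoc, h1, ← Category.assoc,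
        ← F.map_comp, hsq, F.map_comp, Category.assoc, h1']
    · rw [G.map_comp, ← Category.assoc, hl₁, h2]
    · rw [G.map_comp, ← Category.assoc, hl₂, h3']

/-- Lift against a `G`-image of a product in `B`. -/
theorem gprod_lift {J : Type u} [HasLimitsOfShape (Discrete J) B]
    [PreservesLimitsOfShape (Discrete J) G] (as : J → B)
    (w : ∀ j, d ⟶ G.obj (as j)) :
    ∃ W : d ⟶ G.obj (∏ᶜ as), ∀ j, W ≫ G.map (Pi.π as j) = w j := by
  have h := isLimitOfPreserves G (limit.isLimit (Discrete.functor as))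
  exact ⟨h.lift ⟨d, Discrete.natTrans (fun j => w j.as)⟩, fun j => h.fac _ ⟨j⟩⟩

theorem gprod_hom_ext {J : Type u} [HasLimitsOfShape (Discrete J) B]
    [PreservesLimitsOfShape (Discrete J) G] (as : J → B) {X : D}
    (W W' : X ⟶ G.obj (∏ᶜ as))
    (h : ∀ j, W ≫ G.map (Pi.π as j) = W' ≫ G.map (Pi.π as j)) : W = W' :=
  (isLimitOfPreserves G (limit.isLimit (Discrete.functor as))).hom_ext (fun j => h j.as)

theorem lan_map_ι {c c' : C} (h : c ⟶ c') (g : CostructuredArrow F c)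
    (u : d ⟶ G.obj g.left) :
    (F.pointwiseLeftKanExtension (G ⋙ coyoneda.obj (op d))).map h
        (colimit.ι (lanDiagram F G d c) g u)
      = colimit.ι (lanDiagram F G d c') (CostructuredArrow.mk (g.hom ≫ h)) u := by
  have := ConcreteCategory.congr_hom (colimit.ι_desc (F := lanDiagram F G d c)
    (Cocone.mk (colimit (lanDiagram F G d c'))
      { app := fun g => colimit.ι (lanDiagram F G d c') ((CostructuredArrow.map h).obj g)
        naturality := fun g₁ g₂ φ => by
          exact (colimit.w (lanDiagram F G d c') ((CostructuredArrow.map h).map φ)).trans (Category.comp_id _).symm }) g) u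
  exact this

end Aux

theorem statement11 (r : Cardinal.{u}) (hr : r.IsRegular)
    {B : Type u} [SmallCategory B] {C : Type v} [Category.{u} C]
    {D : Type w} [Category.{u} D]
    (F : B ⥤ C) (G : B ⥤ D) (hWPC : WeakPullbackCondition G)
    (hB : ∀ J : Type u, Cardinal.mk J < r → HasLimitsOfShape (Discrete J) B)
    (hG : ∀ J : Type u, Cardinal.mk J < r → PreservesLimitsOfShape (Discrete J) G)
    (d : D) :
    ∀ J : Type u, Cardinal.mk J < r →
      PreservesLimitsOfShape (Discrete J)
        (F.pointwiseLeftKanExtension (G ⋙ coyoneda.obj (op d))) := by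
  intro J hJ
  haveI hBJ := hB J hJ
  haveI hGJ := hG J hJ
  constructor
  intro K
  constructor
  intro cc hcc
  rw [Types.isLimit_iff]
  intro s hs
  -- uniqueness key: two elements with equal components are equal
  have key : ∀ x y : colimit (lanDiagram F G d cc.pt),
      (∀ j : J, (F.pointwiseLeftKanExtension (G ⋙ coyoneda.obj (op d))).map (cc.π.app ⟨j⟩) x =
        (F.pointwiseLeftKanExtension (G ⋙ coyoneda.obj (op d))).map (cc.π.app ⟨j⟩) y) →
      x = y := by
    intro x y hxy
    obtain ⟨gx, ux, rfl⟩ := Types.jointly_surjective' (F := lanDiagram F G d cc.pt) x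
    obtain ⟨gy, uy, rfl⟩ := Types.jointly_surjective' (F := lanDiagram F G d cc.pt) y
    have hspan : ∀ j : J, ∃ (a : B) (p : a ⟶ gx.left) (q : a ⟶ gy.left) (w : d ⟶ G.obj a),
        F.map p ≫ (gx.hom ≫ cc.π.app ⟨j⟩) = F.map q ≫ (gy.hom ≫ cc.π.app ⟨j⟩) ∧
        w ≫ G.map p = ux ∧ w ≫ G.map q = uy := by
      intro j
      have h0 : colimit.ι (lanDiagram F G d (K.obj ⟨j⟩))
            (CostructuredArrow.mk (gx.hom ≫ cc.π.app ⟨j⟩)) ux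
          = colimit.ι (lanDiagram F G d (K.obj ⟨j⟩))
            (CostructuredArrow.mk (gy.hom ≫ cc.π.app ⟨j⟩)) uy := by
        exact (lan_map_ι F G d _ gx ux).symm.trans ((hxy j).trans (lan_map_ι F G d _ gy uy))
      obtain ⟨a, p, q, w, h1, h2, h3⟩ := eqvGen_to_span F G d hWPC _ _ (Types.colimit_eq h0)
      exact ⟨a, p, q, w, h1, h2, h3⟩
    choose a p q w hcomm hwx hwy using hspan
    obtain ⟨Wa, hWa⟩ := gprod_lift G d a w
    -- step 1: weak pullback against the diagonal of gx.left
    obtain ⟨s₁, α₁, β₁, hsq₁, hwp₁⟩ :=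
      hWPC (Pi.lift (fun _ : J => 𝟙 gx.left)) (Pi.lift (fun j => Pi.π a j ≫ p j))
    have hα₁ : ∀ j : J, α₁ = β₁ ≫ Pi.π a j ≫ p j := by
      intro j
      have := congrArg (· ≫ Pi.π (fun _ : J => gx.left) j) hsq₁
      simpa using this
    obtain ⟨l₁, hl₁x, hl₁a⟩ := hwp₁.2 ux Wa (by
      refine gprod_hom_ext G (fun _ : J => gx.left)
        (ux ≫ G.map (Pi.lift (fun _ : J => 𝟙 gx.left)))
        (Wa ≫ G.map (Pi.lift (fun j => Pi.π a j ≫ p j))) (fun j => ?_)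
      rw [Category.assoc, Category.assoc, ← G.map_comp, ← G.map_comp, limit.lift_π,
        limit.lift_π]
      show ux ≫ G.map (𝟙 _) = Wa ≫ G.map (Pi.π a j ≫ p j)
      rw [G.map_id, Category.comp_id, G.map_comp, ← Category.assoc, hWa, hwx])
    -- step 2: weak pullback against the diagonal of gy.left
    obtain ⟨s₂, α₂, β₂, hsq₂, hwp₂⟩ :=
      hWPC (Pi.lift (fun _ : J => 𝟙 gy.left)) (β₁ ≫ Pi.lift (fun j => Pi.π a j ≫ q j))
    have hα₂ : ∀ j : J, α₂ = β₂ ≫ β₁ ≫ Pi.π a j ≫ q j := by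
      intro j
      have := congrArg (· ≫ Pi.π (fun _ : J => gy.left) j) hsq₂
      simpa using this
    obtain ⟨l₂, hl₂y, hl₂1⟩ := hwp₂.2 uy l₁ (by
      refine gprod_hom_ext G (fun _ : J => gy.left)
        (uy ≫ G.map (Pi.lift (fun _ : J => 𝟙 gy.left)))
        (l₁ ≫ G.map (β₁ ≫ Pi.lift (fun j => Pi.π a j ≫ q j))) (fun j => ?_)
      rw [Category.assoc, Category.assoc, ← G.map_comp, ← G.map_comp, limit.lift_π]
      show uy ≫ G.map (𝟙 _) = l₁ ≫ G.map ((β₁ ≫ Pi.lift (fun j => Pi.π a j ≫ q j)) ≫ _)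
      rw [G.map_id, Category.comp_id]
      erw [Category.assoc, limit.lift_π]
      show uy = l₁ ≫ G.map (β₁ ≫ Pi.π a j ≫ q j)
      rw [G.map_comp, ← Category.assoc, hl₁a, G.map_comp, ← Category.assoc, hWa, hwy])
    apply span_sound F G d gx gy ux uy s₂ (β₂ ≫ α₁) α₂ l₂
    · apply hcc.hom_ext
      rintro ⟨j⟩
      have hcj := hcomm j
      rw [Category.assoc, Category.assoc, hα₁ j, hα₂ j]
      simp only [Functor.map_comp, Category.assoc]
      rw [hcj]
    · rw [G.map_comp, ← Category.assoc, hl₂1, hl₁x]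
    · exact hl₂y
  -- existence: assemble a preimage using products in B
  have hrep : ∀ j : J, ∃ (g : CostructuredArrow F (K.obj ⟨j⟩)) (u : d ⟶ G.obj g.left),
      colimit.ι (lanDiagram F G d (K.obj ⟨j⟩)) g u = s ⟨j⟩ :=
    fun j => Types.jointly_surjective' (s ⟨j⟩)
  choose g₀ u₀ hgu using hrep
  obtain ⟨W, hW⟩ := gprod_lift G d (fun j => (g₀ j).left) u₀
  let f : F.obj (∏ᶜ fun j => (g₀ j).left) ⟶ cc.pt :=
    hcc.lift ⟨F.obj _, Discrete.natTrans (fun j => F.map (Pi.π _ j.as) ≫ (g₀ j.as).hom)⟩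
  have hfj : ∀ j : J, f ≫ cc.π.app ⟨j⟩
      = F.map (Pi.π (fun j => (g₀ j).left) j) ≫ (g₀ j).hom :=
    fun j => hcc.fac _ ⟨j⟩
  refine ⟨colimit.ι (lanDiagram F G d cc.pt) (CostructuredArrow.mk f) W, ?_, ?_⟩
  · rintro ⟨j⟩
    show (F.pointwiseLeftKanExtension (G ⋙ coyoneda.obj (op d))).map (cc.π.app ⟨j⟩)
      (colimit.ι (lanDiagram F G d cc.pt) (CostructuredArrow.mk f) W) = s ⟨j⟩
    refine (lan_map_ι F G d (cc.π.app ⟨j⟩) (CostructuredArrow.mk f) W).trans ?_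
    rw [← hgu j]
    exact Types.colimit_sound
      (CostructuredArrow.homMk (Pi.π (fun j => (g₀ j).left) j) (hfj j).symm) (hW j)
  · intro y hy
    apply key
    intro j
    have h1 : (F.pointwiseLeftKanExtension (G ⋙ coyoneda.obj (op d))).map (cc.π.app ⟨j⟩) y
        = s ⟨j⟩ := hy ⟨j⟩
    have h2 : (F.pointwiseLeftKanExtension (G ⋙ coyoneda.obj (op d))).map (cc.π.app ⟨j⟩)
        (colimit.ι (lanDiagram F G d cc.pt) (CostructuredArrow.mk f) W) = s ⟨j⟩ := by
      refine (lan_map_ι F G d (cc.π.app ⟨j⟩) (CostructuredArrow.mk f) W).trans ?_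
      rw [← hgu j]
      exact Types.colimit_sound
        (CostructuredArrow.homMk (Pi.π (fun j => (g₀ j).left) j) (hfj j).symm) (hW j)
    rw [h1, h2]
end

section
/- Let E be a category with finite products and small colimits such that for every object C of E the functor C × (−) : E ⥤ E preserves small colimits. Then for any functors P₁ : B₁ ⥤ E and P₂ : B₂ ⥤ E on small categories B₁, B₂, the canonical morphism colim(P₁ ⊗ P₂) ⟶ colim P₁ × colim P₂ is an isomorphism, where P₁ ⊗ P₂ : B₁ × B₂ ⥤ E sends (b₁, b₂) to P₁ b₁ × P₂ b₂; and likewise for any finite number of factors. -/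
/-!
STATEMENT 12: Let `E` be a category with finite products and small colimits such that
`C × (−)` preserves small colimits for every object `C`. Then for functors
`P₁ : B₁ ⥤ E`, `P₂ : B₂ ⥤ E` on small categories, the canonical morphism
`colim (P₁ ⊗ P₂) ⟶ colim P₁ × colim P₂` is an isomorphism; and likewise for any finite
number of factors.
-/

open CategoryTheory CategoryTheory.Limits

universe v e

variable {E : Type e} [Category.{v} E] [HasFiniteProducts E] [HasColimitsOfSize.{v, v} E]

/-- The functor `P₁ ⊗ P₂ : B₁ × B₂ ⥤ E`, `(b₁, b₂) ↦ P₁ b₁ × P₂ b₂`. -/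
noncomputable def tensorTwo {B₁ B₂ : Type v} [SmallCategory B₁] [SmallCategory B₂]
    (P₁ : B₁ ⥤ E) (P₂ : B₂ ⥤ E) : B₁ × B₂ ⥤ E where
  obj b := P₁.obj b.1 ⨯ P₂.obj b.2
  map f := prod.map (P₁.map f.1) (P₂.map f.2)
  map_id b := by simp [prod.map_id_id]
  map_comp f g := by simp [prod.map_map]

/-- The cocone over `P₁ ⊗ P₂` with point `colim P₁ × colim P₂` induced by the colimit
cocones of `P₁` and `P₂`. -/
noncomputable def tensorTwoCocone {B₁ B₂ : Type v} [SmallCategory B₁] [SmallCategory B₂]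
    (P₁ : B₁ ⥤ E) (P₂ : B₂ ⥤ E) : Cocone (tensorTwo P₁ P₂) where
  pt := colimit P₁ ⨯ colimit P₂
  ι :=
    { app := fun b => prod.map (colimit.ι P₁ b.1) (colimit.ι P₂ b.2)
      naturality := fun b b' f => by
        simp [tensorTwo, prod.map_map] }

/-- The `n`-ary functor `⊗ᵢ Pᵢ : ∏ᵢ Bᵢ ⥤ E`, `(bᵢ)ᵢ ↦ ∏ᵢ Pᵢ bᵢ`. -/
noncomputable def tensorFam {n : ℕ} {B : Fin n → Type v} [∀ i, SmallCategory (B i)]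
    (P : ∀ i, B i ⥤ E) : (∀ i, B i) ⥤ E where
  obj b := ∏ᶜ fun i => (P i).obj (b i)
  map f := Limits.Pi.map fun i => (P i).map (f i)
  map_id b := by
    simp [CategoryTheory.Pi.id_apply, Limits.Pi.map_id]
  map_comp f g := by
    simp [CategoryTheory.Pi.comp_apply, Limits.Pi.map_comp_map]

/-- The cocone over `⊗ᵢ Pᵢ` with point `∏ᵢ colim Pᵢ` induced by the colimit cocones. -/
noncomputable def tensorFamCocone {n : ℕ} {B : Fin n → Type v} [∀ i, SmallCategory (B i)]
    (P : ∀ i, B i ⥤ E) : Cocone (tensorFam P) where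
  pt := ∏ᶜ fun i => colimit (P i)
  ι :=
    { app := fun b => Limits.Pi.map fun i => colimit.ι (P i) (b i)
      naturality := fun b b' f => by
        simp [tensorFam, Limits.Pi.map_comp_map] }

/-- Natural isomorphism `(- ⨯ Y) ≅ (Y ⨯ -)`. -/
noncomputable def prodFlipIso (Y : E) : prod.functor.flip.obj Y ≅ prod.functor.obj Y :=
  NatIso.ofComponents (fun X => prod.braiding X Y)
    (by intro X X' f; exact braid_natural f (𝟙 Y))

section Pair

variable {B₁ B₂ : Type v} [SmallCategory B₁] [SmallCategory B₂]
  {P₁ : B₁ ⥤ E} {P₂ : B₂ ⥤ E}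

/-- The cocone over `P₁ ⊗ P₂` induced by a pair of cocones. -/
noncomputable def pairCocone (c₁ : Cocone P₁) (c₂ : Cocone P₂) :
    Cocone (tensorTwo P₁ P₂) where
  pt := c₁.pt ⨯ c₂.pt
  ι :=
    { app := fun b => prod.map (c₁.ι.app b.1) (c₂.ι.app b.2)
      naturality := fun b b' f => by
        simp [tensorTwo, prod.map_map] }

/-- Fixing the first variable, a cocone over `P₁ ⊗ P₂` gives a cocone over
`P₂ ⋙ (P₁ b₁ ⨯ -)`. -/
noncomputable def coconeFixFst (s : Cocone (tensorTwo P₁ P₂)) (b₁ : B₁) :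
    Cocone (P₂ ⋙ prod.functor.obj (P₁.obj b₁)) where
  pt := s.pt
  ι :=
    { app := fun b₂ => s.ι.app (b₁, b₂)
      naturality := fun b₂ b₂' f => by
        have := s.w ((𝟙 b₁, f) : (b₁, b₂) ⟶ (b₁, b₂'))
        simp only [tensorTwo, Functor.comp_map, prod.functor_obj_map, Functor.const_obj_map,
          Category.comp_id] at this ⊢
        simp at this
        exact this.trans (Category.comp_id _).symm }

noncomputable def isColimitPairCocone
    (hE : ∀ C : E, PreservesColimitsOfSize.{v, v} (prod.functor.obj C))
    {c₁ : Cocone P₁} {c₂ : Cocone P₂} (h₁ : IsColimit c₁) (h₂ : IsColimit c₂) :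
    IsColimit (pairCocone c₁ c₂) := by
  have hA : ∀ b₁ : B₁, IsColimit ((prod.functor.obj (P₁.obj b₁)).mapCocone c₂) := fun b₁ => by
    have := hE (P₁.obj b₁)
    exact isColimitOfPreserves _ h₂
  have hC : IsColimit ((prod.functor.flip.obj c₂.pt).mapCocone c₁) := by
    have := hE c₂.pt
    have := preservesColimits_of_natIso (prodFlipIso c₂.pt).symm
    exact isColimitOfPreserves _ h₁
  -- the first-stage descents
  let g : ∀ (s : Cocone (tensorTwo P₁ P₂)) (b₁ : B₁), P₁.obj b₁ ⨯ c₂.pt ⟶ s.pt :=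
    fun s b₁ => (hA b₁).desc (coconeFixFst s b₁)
  have hg : ∀ (s : Cocone (tensorTwo P₁ P₂)) (b₁ : B₁) (b₂ : B₂),
      prod.map (𝟙 (P₁.obj b₁)) (c₂.ι.app b₂) ≫ g s b₁ = s.ι.app (b₁, b₂) :=
    fun s b₁ b₂ => (hA b₁).fac (coconeFixFst s b₁) b₂
  -- g is a cocone over `P₁ ⋙ (- ⨯ c₂.pt)`
  let C' : ∀ s : Cocone (tensorTwo P₁ P₂), Cocone (P₁ ⋙ prod.functor.flip.obj c₂.pt) :=
    fun s =>
    { pt := s.pt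
      ι :=
        { app := g s
          naturality := fun b₁ b₁' f => by
            simp only [Functor.const_obj_map, Category.comp_id]
            refine (hA b₁).hom_ext fun b₂ => ?_
            have h1 : prod.map (𝟙 (P₁.obj b₁)) (c₂.ι.app b₂) ≫
                (P₁ ⋙ prod.functor.flip.obj c₂.pt).map f ≫ g s b₁' =
                prod.map (P₁.map f) (𝟙 _) ≫ prod.map (𝟙 _) (c₂.ι.app b₂) ≫ g s b₁' := by
              simp [prod.map_map]
              erw [prod.map_map_assoc]; simp
            have h2 := s.w ((f, 𝟙 b₂) : (b₁, b₂) ⟶ (b₁', b₂))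
            simp only [tensorTwo, Functor.const_obj_map, Category.comp_id] at h2
            show prod.map (𝟙 (P₁.obj b₁)) (c₂.ι.app b₂) ≫
                (P₁ ⋙ prod.functor.flip.obj c₂.pt).map f ≫ g s b₁' =
              prod.map (𝟙 (P₁.obj b₁)) (c₂.ι.app b₂) ≫ g s b₁ ≫ 𝟙 s.pt
            rw [h1, hg s b₁' b₂, Category.comp_id, hg s b₁ b₂, ← h2]
            simp } }
  exact
    { desc := fun s => hC.desc (C' s)
      fac := fun s b => by
        obtain ⟨b₁, b₂⟩ := b
        have hfac : prod.map (c₁.ι.app b₁) (𝟙 c₂.pt) ≫ hC.desc (C' s) = g s b₁ :=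
          hC.fac (C' s) b₁
        show (pairCocone c₁ c₂).ι.app (b₁, b₂) ≫ hC.desc (C' s) = s.ι.app (b₁, b₂)
        rw [← hg s b₁ b₂, ← hfac]
        simp [pairCocone, prod.map_map_assoc]
        erw [prod.map_map_assoc]; simp; rfl
      uniq := fun s m hm => by
        refine hC.uniq (C' s) m fun b₁ => ?_
        refine (hA b₁).hom_ext fun b₂ => ?_
        show prod.map (𝟙 (P₁.obj b₁)) (c₂.ι.app b₂) ≫ prod.map (c₁.ι.app b₁) (𝟙 c₂.pt) ≫ m =
          prod.map (𝟙 (P₁.obj b₁)) (c₂.ι.app b₂) ≫ g s b₁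
        rw [hg s b₁ b₂, ← hm (b₁, b₂)]
        simp [pairCocone, prod.map_map_assoc]
        erw [prod.map_map_assoc]; simp; rfl }

end Pair

section FinStuff

/-- The product over `Fin (n+1)` splits as a binary product. -/
noncomputable def finConsProdIso {n : ℕ} (f : Fin (n + 1) → E) :
    (f 0 ⨯ ∏ᶜ fun j : Fin n => f j.succ) ≅ ∏ᶜ f where
  hom := Pi.lift fun i =>
    Fin.cases (motive := fun i => (f 0 ⨯ ∏ᶜ fun j : Fin n => f j.succ) ⟶ f i)
      prod.fst (fun j => prod.snd ≫ Pi.π _ j) i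
  inv := prod.lift (Pi.π f 0) (Pi.lift fun j => Pi.π f j.succ)
  hom_inv_id := by
    apply Limits.prod.hom_ext
    · simp
      exact prod.lift_fst _ _
    · apply limit.hom_ext
      rintro ⟨j⟩
      simp
      erw [prod.lift_snd_assoc, Category.assoc, Pi.lift_π, Pi.lift_π]
      rfl
  inv_hom_id := by
    apply limit.hom_ext
    rintro ⟨i⟩
    induction i using Fin.cases <;> simp
    · exact prod.lift_fst _ _
    · erw [prod.lift_snd_assoc, Pi.lift_π]

variable {n : ℕ} (B : Fin (n + 1) → Type v) [∀ i, SmallCategory (B i)]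

/-- Splitting off the first coordinate of a pi category over `Fin (n+1)`. -/
def finConsFunctor : (∀ i, B i) ⥤ (B 0) × (∀ j : Fin n, B j.succ) where
  obj b := (b 0, fun j => b j.succ)
  map f := (f 0, fun j => f j.succ)
  map_id b := rfl
  map_comp f g := rfl

/-- Reassembling a pi category over `Fin (n+1)` from the split pieces. -/
def finConsInverse : (B 0) × (∀ j : Fin n, B j.succ) ⥤ (∀ i, B i) where
  obj p := Fin.cons p.1 p.2
  map {p q} f i :=
    Fin.cases (motive := fun i => (Fin.cons p.1 p.2 : ∀ i, B i) i ⟶ Fin.cons q.1 q.2 i)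
      f.1 f.2 i
  map_id p := by
    funext i
    induction i using Fin.cases <;> rfl
  map_comp f g := by
    funext i
    induction i using Fin.cases <;> rfl

/-- The pi category over `Fin (n+1)` splits off the first factor. -/
noncomputable def finConsEquiv : (∀ i, B i) ≌ (B 0) × (∀ j : Fin n, B j.succ) :=
  CategoryTheory.Equivalence.mk (finConsFunctor B) (finConsInverse B)
    (NatIso.ofComponents
      (fun b =>
        { hom := fun i =>
            Fin.cases (motive := fun i =>
                b i ⟶ ((finConsFunctor B ⋙ finConsInverse B).obj b) i)
              (𝟙 (b 0)) (fun j => 𝟙 (b j.succ)) i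
          inv := fun i =>
            Fin.cases (motive := fun i =>
                ((finConsFunctor B ⋙ finConsInverse B).obj b) i ⟶ b i)
              (𝟙 (b 0)) (fun j => 𝟙 (b j.succ)) i
          hom_inv_id := by
            funext i
            induction i using Fin.cases <;> simp [finConsFunctor, finConsInverse] <;> exact Category.id_comp _
          inv_hom_id := by
            funext i
            induction i using Fin.cases <;> simp [finConsFunctor, finConsInverse] <;> exact Category.id_comp _ })
      (fun {b b'} f => by
        funext i
        induction i using Fin.cases <;>
          simp [finConsFunctor, finConsInverse, CategoryTheory.Pi.comp_apply] <;>
            exact (Category.comp_id _).trans (Category.id_comp _).symm))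
    (NatIso.ofComponents (fun p => Iso.refl _) (fun {p q} f => by
      ext <;> simp [finConsFunctor, finConsInverse] <;>
        exact (Category.comp_id _).trans (Category.id_comp _).symm))

end FinStuff

/-- A product over `Fin 0` is terminal. -/
noncomputable def isTerminalPiEmpty (f : Fin 0 → E) : IsTerminal (∏ᶜ f) :=
  IsTerminal.ofUniqueHom (fun X => Pi.lift fun i => i.elim0)
    (fun X m => limit.hom_ext fun ⟨i⟩ => i.elim0)

/-- Base case: the canonical cocone for the empty family is a colimit. -/
noncomputable def isColimitTensorFamZero (B : Fin 0 → Type v) [∀ i, SmallCategory (B i)]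
    (P : ∀ i, B i ⥤ E) : IsColimit (tensorFamCocone P) := by
  have t2 : IsTerminal ((tensorFamCocone P).pt) := isTerminalPiEmpty _
  let b₀ : ∀ i : Fin 0, B i := fun i => i.elim0
  have t1 : IsTerminal (∏ᶜ fun i => (P i).obj (b₀ i)) := isTerminalPiEmpty _
  have hiso : IsIso ((tensorFamCocone P).ι.app b₀) := by
    have h : (tensorFamCocone P).ι.app b₀ = (t1.uniqueUpToIso t2).hom := t2.hom_ext _ _
    rw [h]; exact Iso.isIso_hom _
  exact
    { desc := fun s => inv ((tensorFamCocone P).ι.app b₀) ≫ s.ι.app b₀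
      fac := fun s b => by
        obtain rfl : b₀ = b := funext fun i => i.elim0
        simp
      uniq := fun s m hm => by
        show m = inv ((tensorFamCocone P).ι.app b₀) ≫ s.ι.app b₀
        rw [← hm b₀]
        simp }

/-- The comparison natural isomorphism used in the induction step. -/
noncomputable def tensorFamSplitIso {n : ℕ} {B : Fin (n + 1) → Type v}
    [∀ i, SmallCategory (B i)] (P : ∀ i, B i ⥤ E) :
    finConsFunctor B ⋙ tensorTwo (P 0) (tensorFam fun j : Fin n => P j.succ) ≅ tensorFam P :=
  NatIso.ofComponents (fun b => finConsProdIso fun i => (P i).obj (b i))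
    (fun {b b'} f => by
      apply limit.hom_ext
      rintro ⟨i⟩
      induction i using Fin.cases <;>
        simp [tensorTwo, tensorFam, finConsProdIso, finConsFunctor])

lemma finConsEquiv_functor {n : ℕ} (B : Fin (n + 1) → Type v) [∀ i, SmallCategory (B i)] :
    (finConsEquiv B).functor = finConsFunctor B := rfl

/-- The canonical cocone for an `n`-ary family is a colimit. -/
noncomputable def isColimitTensorFamCocone
    (hE : ∀ C : E, PreservesColimitsOfSize.{v, v} (prod.functor.obj C)) :
    ∀ (n : ℕ) (B : Fin n → Type v) [∀ i, SmallCategory (B i)] (P : ∀ i, B i ⥤ E),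
      IsColimit (tensorFamCocone P)
  | 0, B, _, P => isColimitTensorFamZero B P
  | (n + 1), B, _, P => by
    have hQ := isColimitTensorFamCocone hE n _ (fun j : Fin n => P j.succ)
    have hpair := isColimitPairCocone hE (colimit.isColimit (P 0)) hQ
    have h1 := hpair.whiskerEquivalence (finConsEquiv B)
    have h2 := (IsColimit.precomposeInvEquiv (tensorFamSplitIso P) _).symm h1
    refine IsColimit.ofIsoColimit h2
      (Cocones.ext (finConsProdIso fun i => colimit (P i)) fun b => ?_)
    apply limit.hom_ext
    rintro ⟨i⟩
    induction i using Fin.cases <;>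
      simp [tensorFamSplitIso, finConsProdIso, pairCocone, tensorFamCocone, tensorFam,
        finConsEquiv_functor, finConsFunctor, Cocone.precompose, Cocone.whisker, Pi.π]
    · erw [Category.assoc, prod.map_fst, prod.lift_fst_assoc]
    · erw [Category.assoc, prod.map_snd_assoc, Limits.Pi.map_π, prod.lift_snd_assoc, Pi.lift_π_assoc]

theorem statement12
    (hE : ∀ C : E, PreservesColimitsOfSize.{v, v} (prod.functor.obj C))
    {B₁ B₂ : Type v} [SmallCategory B₁] [SmallCategory B₂]
    (P₁ : B₁ ⥤ E) (P₂ : B₂ ⥤ E) :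
    IsIso (colimit.desc (tensorTwo P₁ P₂) (tensorTwoCocone P₁ P₂)) ∧
      ∀ (n : ℕ) (B : Fin n → Type v) [∀ i, SmallCategory (B i)] (P : ∀ i, B i ⥤ E),
        IsIso (colimit.desc (tensorFam P) (tensorFamCocone P)) := by
  constructor
  · have h := isColimitPairCocone hE (colimit.isColimit P₁) (colimit.isColimit P₂)
    have h' : IsColimit (tensorTwoCocone P₁ P₂) :=
      h.ofIsoColimit (Cocones.ext (Iso.refl _) (fun b => by
        simp [pairCocone, tensorTwoCocone]
        exact Category.comp_id _))
    have heq : colimit.desc (tensorTwo P₁ P₂) (tensorTwoCocone P₁ P₂) =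
        (IsColimit.coconePointUniqueUpToIso (colimit.isColimit _) h').hom := rfl
    rw [heq]
    infer_instance
  · intro n B _ P
    have h' := isColimitTensorFamCocone hE n B P
    have heq : colimit.desc (tensorFam P) (tensorFamCocone P) =
        (IsColimit.coconePointUniqueUpToIso (colimit.isColimit _) h').hom := rfl
    rw [heq]
    infer_instance
end

section
/- Let B and A be small categories with finite products and let J : B ⥤ A be a functor preserving finite products. Then the precomposition functor (−) ∘ J : Set^A ⥤ Set^B restricts to a functor Alg(A) ⥤ Alg(B) between the full subcategories of finite-product-preserving Set-valued functors, and this restricted functor has a left adjoint given by Y ↦ Lan_J Y (the pointwise left Kan extension of Y along J, which preserves finite products whenever Y does). -/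
/-!
STATEMENT 14: Let `B` and `A` be small categories with finite products and `J : B ⥤ A` a
functor preserving finite products. Then precomposition with `J` restricts to a functor
`Alg(A) ⥤ Alg(B)` between the full subcategories of finite-product-preserving `Set`-valued
functors, and this restricted functor has a left adjoint given on objects by
`Y ↦ Lan_J Y` (the pointwise left Kan extension, which preserves finite products whenever
`Y` does).
-/

open CategoryTheory CategoryTheory.Limits

universe u

/-- The category of finite-product-preserving `Set`-valued functors on `K`. -/
abbrev FPAlg (K : Type u) [SmallCategory K] :=
  ObjectProperty.FullSubcategory (fun Y : K ⥤ Type u => PreservesFiniteProducts Y)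

/-- The restriction of the precomposition functor `(−) ∘ J : Set^A ⥤ Set^B` to the full
subcategories of finite-product-preserving functors. -/
def restrictedPrecomp {B A : Type u} [SmallCategory B] [SmallCategory A]
    (J : B ⥤ A) [PreservesFiniteProducts J] : FPAlg A ⥤ FPAlg B :=
  ObjectProperty.lift _
    (ObjectProperty.ι _ ⋙ (Functor.whiskeringLeft B A (Type u)).obj J)
    (fun X => by
      haveI : PreservesFiniteProducts X.obj := X.property
      constructor
      intro K
      exact comp_preservesLimitsOfShape J X.obj)

namespace Stmt14

variable {B A : Type u} [SmallCategory B] [SmallCategory A]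
  [HasFiniteProducts B] [HasFiniteProducts A]
  (J : B ⥤ A) (Y : B ⥤ Type u) [PreservesFiniteProducts Y]

/-- Diagram for the pointwise left Kan extension at `a`. -/
abbrev Dgm (a : A) : CostructuredArrow J a ⥤ Type u := CostructuredArrow.proj J a ⋙ Y

/-- The equivalence `Y (b₁ ⨯ b₂) ≃ Y b₁ × Y b₂`. -/
noncomputable def pe (b₁ b₂ : B) : Y.obj (b₁ ⨯ b₂) ≃ Y.obj b₁ × Y.obj b₂ :=
  Equiv.ofBijective (fun y => (Y.map prod.fst y, Y.map prod.snd y)) (by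
    have h : (fun y => (Y.map prod.fst y, Y.map prod.snd y)) =
        ⇑(prodComparison Y b₁ b₂ ≫ (Types.binaryProductIso (Y.obj b₁) (Y.obj b₂)).hom :
          Y.obj (b₁ ⨯ b₂) ⟶ Y.obj b₁ × Y.obj b₂) := by
      funext y
      have h1 := types_congr_hom (Types.binaryProductIso_hom_comp_fst (Y.obj b₁) (Y.obj b₂))
        (prodComparison Y b₁ b₂ y)
      have h2 := types_congr_hom (Types.binaryProductIso_hom_comp_snd (Y.obj b₁) (Y.obj b₂))
        (prodComparison Y b₁ b₂ y)
      have h3 := types_congr_hom (prodComparison_fst (F := Y) (A := b₁) (B := b₂)) y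
      have h4 := types_congr_hom (prodComparison_snd (F := Y) (A := b₁) (B := b₂)) y
      simp only [types_comp_apply] at h1 h2 h3 h4
      apply Prod.ext
      · simp only [types_comp_apply]
        exact h3.symm.trans h1.symm
      · simp only [types_comp_apply]
        exact h4.symm.trans h2.symm
    rw [h]
    haveI : IsIso (prodComparison Y b₁ b₂) := by
      rw [← PreservesLimitPair.iso_hom]
      infer_instance
    exact (isIso_iff_bijective _).mp inferInstance)

lemma pe_apply (b₁ b₂ : B) (y : Y.obj (b₁ ⨯ b₂)) :
    pe Y b₁ b₂ y = (Y.map prod.fst y, Y.map prod.snd y) := rfl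

lemma pe_symm_fst {b₁ b₂ : B} (y₁ : Y.obj b₁) (y₂ : Y.obj b₂) :
    Y.map prod.fst ((pe Y b₁ b₂).symm (y₁, y₂)) = y₁ :=
  congrArg Prod.fst ((pe Y b₁ b₂).apply_symm_apply (y₁, y₂))

lemma pe_symm_snd {b₁ b₂ : B} (y₁ : Y.obj b₁) (y₂ : Y.obj b₂) :
    Y.map prod.snd ((pe Y b₁ b₂).symm (y₁, y₂)) = y₂ :=
  congrArg Prod.snd ((pe Y b₁ b₂).apply_symm_apply (y₁, y₂))

lemma pe_symm_natural {b₁ b₂ b₁' b₂' : B} (g₁ : b₁ ⟶ b₁') (g₂ : b₂ ⟶ b₂')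
    (y₁ : Y.obj b₁) (y₂ : Y.obj b₂) :
    Y.map (prod.map g₁ g₂) ((pe Y b₁ b₂).symm (y₁, y₂)) =
      (pe Y b₁' b₂').symm (Y.map g₁ y₁, Y.map g₂ y₂) := by
  apply (pe Y b₁' b₂').injective
  rw [Equiv.apply_symm_apply, pe_apply]
  refine Prod.ext ?_ ?_ <;> dsimp only
  · rw [← FunctorToTypes.map_comp_apply, Limits.prod.map_fst, FunctorToTypes.map_comp_apply,
      pe_symm_fst]
  · rw [← FunctorToTypes.map_comp_apply, Limits.prod.map_snd, FunctorToTypes.map_comp_apply,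
      pe_symm_snd]

lemma pe_symm_diag {b : B} (x : Y.obj b) :
    Y.map (prod.lift (𝟙 b) (𝟙 b)) x = (pe Y b b).symm (x, x) := by
  apply (pe Y b b).injective
  rw [Equiv.apply_symm_apply, pe_apply]
  refine Prod.ext ?_ ?_ <;> dsimp only
  · rw [← FunctorToTypes.map_comp_apply, Limits.prod.lift_fst, FunctorToTypes.map_id_apply]
  · rw [← FunctorToTypes.map_comp_apply, Limits.prod.lift_snd, FunctorToTypes.map_id_apply]


section
variable {a₁ a₂ : A}

/-- The "product" object in the comma category over `a₁ ⨯ a₂`. -/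
noncomputable def PhiObj (c₁ : CostructuredArrow J a₁) (c₂ : CostructuredArrow J a₂) :
    CostructuredArrow J (a₁ ⨯ a₂) :=
  CostructuredArrow.mk
    (Limits.prod.lift (X := a₁) (Y := a₂)
      (J.map (Limits.prod.fst (X := c₁.left) (Y := c₂.left)) ≫ c₁.hom)
      (J.map (Limits.prod.snd (X := c₁.left) (Y := c₂.left)) ≫ c₂.hom))

@[simp] lemma PhiObj_left (c₁ : CostructuredArrow J a₁) (c₂ : CostructuredArrow J a₂) :
    (PhiObj J c₁ c₂).left = (c₁.left ⨯ c₂.left) := rfl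

@[simp] lemma PhiObj_hom (c₁ : CostructuredArrow J a₁) (c₂ : CostructuredArrow J a₂) :
    (PhiObj J c₁ c₂).hom =
      Limits.prod.lift (X := a₁) (Y := a₂)
        (J.map (Limits.prod.fst (X := c₁.left) (Y := c₂.left)) ≫ c₁.hom)
        (J.map (Limits.prod.snd (X := c₁.left) (Y := c₂.left)) ≫ c₂.hom) := rfl

/-- Morphism `PhiObj` in both variables. -/
noncomputable def PhiMap {c₁ c₁' : CostructuredArrow J a₁} {c₂ c₂' : CostructuredArrow J a₂}
    (φ₁ : c₁ ⟶ c₁') (φ₂ : c₂ ⟶ c₂') : PhiObj J c₁ c₂ ⟶ PhiObj J c₁' c₂' :=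
  CostructuredArrow.homMk (prod.map φ₁.left φ₂.left) (by
    apply Limits.prod.hom_ext
    · erw [PhiObj_hom, PhiObj_hom, Category.assoc, Limits.prod.lift_fst, Limits.prod.lift_fst, ← Functor.map_comp_assoc, Limits.prod.map_fst,
        Functor.map_comp_assoc, CostructuredArrow.w φ₁]
      rfl
    · erw [PhiObj_hom, PhiObj_hom, Category.assoc, Limits.prod.lift_snd, Limits.prod.lift_snd, ← Functor.map_comp_assoc, Limits.prod.map_snd,
        Functor.map_comp_assoc, CostructuredArrow.w φ₂]
      rfl)

@[simp] lemma PhiMap_left {c₁ c₁' : CostructuredArrow J a₁} {c₂ c₂' : CostructuredArrow J a₂}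
    (φ₁ : c₁ ⟶ c₁') (φ₂ : c₂ ⟶ c₂') :
    (PhiMap J φ₁ φ₂).left = prod.map φ₁.left φ₂.left := rfl

variable (a₁ a₂)

/-- Inner cocone used to define the pairing map. -/
noncomputable def innerCocone (c₁ : CostructuredArrow J a₁) (y₁ : Y.obj c₁.left) :
    Cocone (Dgm J Y a₂) where
  pt := colimit (Dgm J Y (a₁ ⨯ a₂))
  ι :=
    { app := fun c₂ => ↾fun y₂ =>
        colimit.ι (Dgm J Y (a₁ ⨯ a₂)) (PhiObj J c₁ c₂) ((pe Y _ _).symm (y₁, y₂))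
      naturality := fun c₂ c₂' φ => by
        refine ConcreteCategory.hom_ext _ _ fun y₂ => ?_
        have hw := types_congr_hom (colimit.w (Dgm J Y (a₁ ⨯ a₂)) (PhiMap J (𝟙 c₁) φ))
          ((pe Y c₁.left c₂.left).symm (y₁, y₂))
        simp only [Functor.comp_obj, CostructuredArrow.proj_obj, Functor.comp_map,
          CostructuredArrow.proj_map, types_comp_apply, Functor.const_obj_obj,
          Functor.const_obj_map, types_id_apply, TypeCat.ofHom_apply] at hw ⊢
        rw [← hw]
        show colimit.ι (Dgm J Y (a₁ ⨯ a₂)) (PhiObj J c₁ c₂')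
            ((pe Y _ _).symm (y₁, Y.map φ.left y₂)) = _
        refine congrArg (fun t => colimit.ι (Dgm J Y (a₁ ⨯ a₂)) (PhiObj J c₁ c₂') t) ?_
        refine Eq.trans ?_ (pe_symm_natural Y (𝟙 c₁.left) φ.left y₁ y₂).symm
        simp
        rfl }

/-- The pairing map on the second variable. -/
noncomputable def innerMap (c₁ : CostructuredArrow J a₁) (y₁ : Y.obj c₁.left) :
    colimit (Dgm J Y a₂) ⟶ colimit (Dgm J Y (a₁ ⨯ a₂)) :=
  colimit.desc _ (innerCocone J Y a₁ a₂ c₁ y₁)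

lemma innerMap_ι (c₁ : CostructuredArrow J a₁) (y₁ : Y.obj c₁.left)
    (c₂ : CostructuredArrow J a₂) (y₂ : Y.obj c₂.left) :
    innerMap J Y a₁ a₂ c₁ y₁ (colimit.ι (Dgm J Y a₂) c₂ y₂) =
      colimit.ι (Dgm J Y (a₁ ⨯ a₂)) (PhiObj J c₁ c₂) ((pe Y _ _).symm (y₁, y₂)) :=
  types_congr_hom (colimit.ι_desc (innerCocone J Y a₁ a₂ c₁ y₁) c₂) y₂

/-- Outer cocone used to define the pairing map. -/
noncomputable def outerCocone : Cocone (Dgm J Y a₁) where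
  pt := colimit (Dgm J Y a₂) → colimit (Dgm J Y (a₁ ⨯ a₂))
  ι :=
    { app := fun c₁ => ↾fun y₁ => ⇑(innerMap J Y a₁ a₂ c₁ y₁)
      naturality := fun c₁ c₁' φ => by
        refine ConcreteCategory.hom_ext _ _ fun y₁ => ?_
        show ⇑(innerMap J Y a₁ a₂ c₁' (Y.map φ.left y₁)) = ⇑(innerMap J Y a₁ a₂ c₁ y₁)
        refine congrArg (fun f : colimit (Dgm J Y a₂) ⟶ colimit (Dgm J Y (a₁ ⨯ a₂)) =>
          (f : colimit (Dgm J Y a₂) → colimit (Dgm J Y (a₁ ⨯ a₂)))) ?_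
        apply colimit.hom_ext
        intro c₂
        refine ConcreteCategory.hom_ext _ _ fun y₂ => ?_
        show innerMap J Y a₁ a₂ c₁' (Y.map φ.left y₁) (colimit.ι (Dgm J Y a₂) c₂ y₂) =
          innerMap J Y a₁ a₂ c₁ y₁ (colimit.ι (Dgm J Y a₂) c₂ y₂)
        rw [innerMap_ι J Y a₁ a₂ c₁' _ c₂ y₂, innerMap_ι J Y a₁ a₂ c₁ y₁ c₂ y₂]
        have hw := types_congr_hom (colimit.w (Dgm J Y (a₁ ⨯ a₂)) (PhiMap J φ (𝟙 c₂)))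
          ((pe Y c₁.left c₂.left).symm (y₁, y₂))
        simp only [Functor.comp_obj, CostructuredArrow.proj_obj, Functor.comp_map,
          CostructuredArrow.proj_map, types_comp_apply] at hw
        rw [← hw]
        refine congrArg (fun t => colimit.ι (Dgm J Y (a₁ ⨯ a₂)) (PhiObj J c₁' c₂) t) ?_
        refine Eq.trans ?_ (pe_symm_natural Y φ.left (𝟙 c₂.left) y₁ y₂).symm
        simp
        rfl }

/-- The pairing map. -/
noncomputable def pairingMap :
    colimit (Dgm J Y a₁) → colimit (Dgm J Y a₂) → colimit (Dgm J Y (a₁ ⨯ a₂)) :=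
  fun x => colimit.desc _ (outerCocone J Y a₁ a₂) x

lemma pairingMap_ι (c₁ : CostructuredArrow J a₁) (y₁ : Y.obj c₁.left)
    (c₂ : CostructuredArrow J a₂) (y₂ : Y.obj c₂.left) :
    pairingMap J Y a₁ a₂ (colimit.ι (Dgm J Y a₁) c₁ y₁) (colimit.ι (Dgm J Y a₂) c₂ y₂) =
      colimit.ι (Dgm J Y (a₁ ⨯ a₂)) (PhiObj J c₁ c₂) ((pe Y _ _).symm (y₁, y₂)) := by
  have h1 := types_congr_hom (colimit.ι_desc (outerCocone J Y a₁ a₂) c₁) y₁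
  have h2 : pairingMap J Y a₁ a₂ (colimit.ι (Dgm J Y a₁) c₁ y₁) = ⇑(innerMap J Y a₁ a₂ c₁ y₁) := h1
  rw [h2, innerMap_ι]

end


section
variable [Functor.HasPointwiseLeftKanExtension J Y]

lemma LKE_obj (a : A) : (J.pointwiseLeftKanExtension Y).obj a = colimit (Dgm J Y a) := rfl

lemma LKE_map_ι {a a' : A} (m : a ⟶ a') (c : CostructuredArrow J a) (x : Y.obj c.left) :
    (J.pointwiseLeftKanExtension Y).map m (colimit.ι (Dgm J Y a) c x) =
      colimit.ι (Dgm J Y a') (CostructuredArrow.mk (c.hom ≫ m)) x := by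
  have h : colimit.ι (Dgm J Y a) c ≫ (J.pointwiseLeftKanExtension Y).map m =
      colimit.ι (Dgm J Y a') ((CostructuredArrow.map m).obj c) := by
    rw [Functor.pointwiseLeftKanExtension_map]
    exact colimit.ι_desc _ c
  exact types_congr_hom h x

variable {a₁ a₂ : A}

/-- The comparison function. -/
noncomputable def theta (a₁ a₂ : A) :
    colimit (Dgm J Y (a₁ ⨯ a₂)) → colimit (Dgm J Y a₁) × colimit (Dgm J Y a₂) :=
  fun x => ((J.pointwiseLeftKanExtension Y).map Limits.prod.fst x,
    (J.pointwiseLeftKanExtension Y).map Limits.prod.snd x)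

lemma theta_leftInverse (a₁ a₂ : A) :
    Function.LeftInverse (fun p => pairingMap J Y a₁ a₂ p.1 p.2) (theta J Y a₁ a₂) := by
  intro z
  obtain ⟨c, x, rfl⟩ := Types.jointly_surjective' z
  set c₁ := CostructuredArrow.mk (c.hom ≫ Limits.prod.fst (X := a₁) (Y := a₂)) with hc₁
  set c₂ := CostructuredArrow.mk (c.hom ≫ Limits.prod.snd (X := a₁) (Y := a₂)) with hc₂
  show pairingMap J Y a₁ a₂
      ((J.pointwiseLeftKanExtension Y).map Limits.prod.fst (colimit.ι (Dgm J Y (a₁ ⨯ a₂)) c x))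
      ((J.pointwiseLeftKanExtension Y).map Limits.prod.snd (colimit.ι (Dgm J Y (a₁ ⨯ a₂)) c x)) =
    colimit.ι (Dgm J Y (a₁ ⨯ a₂)) c x
  have m₁ : (J.pointwiseLeftKanExtension Y).map Limits.prod.fst
      (colimit.ι (Dgm J Y (a₁ ⨯ a₂)) c x) = colimit.ι (Dgm J Y a₁) c₁ x := LKE_map_ι J Y _ c x
  have m₂ : (J.pointwiseLeftKanExtension Y).map Limits.prod.snd
      (colimit.ι (Dgm J Y (a₁ ⨯ a₂)) c x) = colimit.ι (Dgm J Y a₂) c₂ x := LKE_map_ι J Y _ c x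
  rw [m₁, m₂, pairingMap_ι J Y a₁ a₂ c₁ x c₂ x]
  have hδw : J.map (Limits.prod.lift (X := c₁.left) (Y := c₂.left) (𝟙 c.left) (𝟙 c.left)) ≫
      (PhiObj J c₁ c₂).hom = c.hom := by
    apply Limits.prod.hom_ext
    · erw [Category.assoc, PhiObj_hom, Limits.prod.lift_fst, ← Functor.map_comp_assoc,
        Limits.prod.lift_fst, CategoryTheory.Functor.map_id, Category.id_comp]
      rfl
    · erw [Category.assoc, PhiObj_hom, Limits.prod.lift_snd, ← Functor.map_comp_assoc,
        Limits.prod.lift_snd, CategoryTheory.Functor.map_id, Category.id_comp]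
      rfl
  have hw := types_congr_hom (colimit.w (Dgm J Y (a₁ ⨯ a₂))
    (CostructuredArrow.homMk (f := c) (f' := PhiObj J c₁ c₂)
      (Limits.prod.lift (X := c₁.left) (Y := c₂.left) (𝟙 c.left) (𝟙 c.left)) hδw)) x
  exact (congrArg (colimit.ι (Dgm J Y (a₁ ⨯ a₂)) (PhiObj J c₁ c₂))
    (pe_symm_diag Y x).symm).trans hw

lemma theta_rightInverse (a₁ a₂ : A) :
    Function.RightInverse (fun p => pairingMap J Y a₁ a₂ p.1 p.2) (theta J Y a₁ a₂) := by
  rintro ⟨u₁, u₂⟩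
  obtain ⟨c₁, y₁, rfl⟩ := Types.jointly_surjective' u₁
  obtain ⟨c₂, y₂, rfl⟩ := Types.jointly_surjective' u₂
  show theta J Y a₁ a₂ (pairingMap J Y a₁ a₂ (colimit.ι (Dgm J Y a₁) c₁ y₁) (colimit.ι (Dgm J Y a₂) c₂ y₂)) = _
  rw [pairingMap_ι J Y a₁ a₂ c₁ y₁ c₂ y₂]
  have heq₁ : J.map (Limits.prod.fst (X := c₁.left) (Y := c₂.left)) ≫ c₁.hom =
      (CostructuredArrow.mk ((PhiObj J c₁ c₂).hom ≫ Limits.prod.fst)).hom := by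
    show _ = (PhiObj J c₁ c₂).hom ≫ Limits.prod.fst
    erw [PhiObj_hom, Limits.prod.lift_fst]
  have heq₂ : J.map (Limits.prod.snd (X := c₁.left) (Y := c₂.left)) ≫ c₂.hom =
      (CostructuredArrow.mk ((PhiObj J c₁ c₂).hom ≫ Limits.prod.snd)).hom := by
    show _ = (PhiObj J c₁ c₂).hom ≫ Limits.prod.snd
    erw [PhiObj_hom, Limits.prod.lift_snd]
  have hw₁ := types_congr_hom (colimit.w (Dgm J Y a₁)
    (CostructuredArrow.homMk
      (f := CostructuredArrow.mk ((PhiObj J c₁ c₂).hom ≫ Limits.prod.fst)) (f' := c₁)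
      (Limits.prod.fst (X := c₁.left) (Y := c₂.left)) heq₁))
    ((pe Y c₁.left c₂.left).symm (y₁, y₂))
  have hw₂ := types_congr_hom (colimit.w (Dgm J Y a₂)
    (CostructuredArrow.homMk
      (f := CostructuredArrow.mk ((PhiObj J c₁ c₂).hom ≫ Limits.prod.snd)) (f' := c₂)
      (Limits.prod.snd (X := c₁.left) (Y := c₂.left)) heq₂))
    ((pe Y c₁.left c₂.left).symm (y₁, y₂))
  refine Prod.ext ?_ ?_
  · exact (LKE_map_ι J Y Limits.prod.fst (PhiObj J c₁ c₂)
      ((pe Y c₁.left c₂.left).symm (y₁, y₂))).trans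
      (hw₁.symm.trans (congrArg (colimit.ι (Dgm J Y a₁) c₁) (pe_symm_fst Y y₁ y₂)))
  · exact (LKE_map_ι J Y Limits.prod.snd (PhiObj J c₁ c₂)
      ((pe Y c₁.left c₂.left).symm (y₁, y₂))).trans
      (hw₂.symm.trans (congrArg (colimit.ι (Dgm J Y a₂) c₂) (pe_symm_snd Y y₁ y₂)))

lemma theta_bijective (a₁ a₂ : A) : Function.Bijective (theta J Y a₁ a₂) :=
  Function.bijective_iff_has_inverse.mpr
    ⟨fun p => pairingMap J Y a₁ a₂ p.1 p.2, theta_leftInverse J Y a₁ a₂,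
      theta_rightInverse J Y a₁ a₂⟩

lemma isIso_prodComparison_LKE (a₁ a₂ : A) :
    IsIso (prodComparison (J.pointwiseLeftKanExtension Y) a₁ a₂) := by
  have hcomp : prodComparison (J.pointwiseLeftKanExtension Y) a₁ a₂ ≫
      (Types.binaryProductIso ((J.pointwiseLeftKanExtension Y).obj a₁)
        ((J.pointwiseLeftKanExtension Y).obj a₂)).hom =
      (↾(theta J Y a₁ a₂) : (J.pointwiseLeftKanExtension Y).obj (a₁ ⨯ a₂) ⟶
        (J.pointwiseLeftKanExtension Y).obj a₁ × (J.pointwiseLeftKanExtension Y).obj a₂) := by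
    refine ConcreteCategory.hom_ext _ _ fun x => ?_
    refine Prod.ext ?_ ?_
    · have h1 := types_congr_hom (Types.binaryProductIso_hom_comp_fst
        ((J.pointwiseLeftKanExtension Y).obj a₁) ((J.pointwiseLeftKanExtension Y).obj a₂))
        (prodComparison (J.pointwiseLeftKanExtension Y) a₁ a₂ x)
      have h2 := types_congr_hom (prodComparison_fst (F := J.pointwiseLeftKanExtension Y)
        (A := a₁) (B := a₂)) x
      simp only [types_comp_apply] at h1 h2 ⊢
      exact h1.trans h2
    · have h1 := types_congr_hom (Types.binaryProductIso_hom_comp_snd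
        ((J.pointwiseLeftKanExtension Y).obj a₁) ((J.pointwiseLeftKanExtension Y).obj a₂))
        (prodComparison (J.pointwiseLeftKanExtension Y) a₁ a₂ x)
      have h2 := types_congr_hom (prodComparison_snd (F := J.pointwiseLeftKanExtension Y)
        (A := a₁) (B := a₂)) x
      simp only [types_comp_apply] at h1 h2 ⊢
      exact h1.trans h2
  haveI : IsIso (↾(theta J Y a₁ a₂) : (J.pointwiseLeftKanExtension Y).obj (a₁ ⨯ a₂) ⟶
      (J.pointwiseLeftKanExtension Y).obj a₁ × (J.pointwiseLeftKanExtension Y).obj a₂) :=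
    (isIso_iff_bijective _).mpr (theta_bijective J Y a₁ a₂)
  have heq : prodComparison (J.pointwiseLeftKanExtension Y) a₁ a₂ =
      (↾(theta J Y a₁ a₂) : (J.pointwiseLeftKanExtension Y).obj (a₁ ⨯ a₂) ⟶
        (J.pointwiseLeftKanExtension Y).obj a₁ × (J.pointwiseLeftKanExtension Y).obj a₂) ≫
      (Types.binaryProductIso ((J.pointwiseLeftKanExtension Y).obj a₁)
        ((J.pointwiseLeftKanExtension Y).obj a₂)).inv := by
    rw [← hcomp, Category.assoc, Iso.hom_inv_id, Category.comp_id]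
  rw [heq]
  infer_instance

/-- The terminal object of the comma category over the terminal object. -/
noncomputable def termObj : CostructuredArrow J (⊤_ A) :=
  CostructuredArrow.mk (terminal.from (J.obj (⊤_ B)))

noncomputable def termObjIsTerminal : IsTerminal (termObj J) :=
  IsTerminal.ofUniqueHom
    (fun X => CostructuredArrow.homMk (terminal.from X.left) (terminal.hom_ext _ _))
    (fun X m => by
      apply CostructuredArrow.hom_ext
      apply terminal.hom_ext)

lemma LKE_preservesLimitsOfShape_pair :
    PreservesLimitsOfShape (Discrete WalkingPair) (J.pointwiseLeftKanExtension Y) := by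
  constructor
  intro K
  haveI := isIso_prodComparison_LKE J Y (K.obj ⟨WalkingPair.left⟩) (K.obj ⟨WalkingPair.right⟩)
  haveI := PreservesLimitPair.of_iso_prod_comparison (J.pointwiseLeftKanExtension Y)
    (K.obj ⟨WalkingPair.left⟩) (K.obj ⟨WalkingPair.right⟩)
  exact preservesLimit_of_iso_diagram (J.pointwiseLeftKanExtension Y) (diagramIsoPair K).symm

lemma LKE_preservesLimitsOfShape_pempty :
    PreservesLimitsOfShape (Discrete PEmpty.{1}) (J.pointwiseLeftKanExtension Y) := by
  have hYT : IsTerminal (Y.obj (⊤_ B)) := terminalIsTerminal.isTerminalObj Y (⊤_ B)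
  have hiso : (J.pointwiseLeftKanExtension Y).obj (⊤_ A) ≅ Y.obj (⊤_ B) :=
    IsColimit.coconePointUniqueUpToIso (colimit.isColimit _)
      (colimitOfDiagramTerminal (termObjIsTerminal J) (Dgm J Y (⊤_ A)))
  have hT : IsTerminal ((J.pointwiseLeftKanExtension Y).obj (⊤_ A)) :=
    hYT.ofIso hiso.symm
  haveI := preservesTerminal_of_iso (J.pointwiseLeftKanExtension Y)
    (hT.uniqueUpToIso terminalIsTerminal)
  exact preservesLimitsOfShape_pempty_of_preservesTerminal _

theorem LKE_preservesFiniteProducts :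
    PreservesFiniteProducts (J.pointwiseLeftKanExtension Y) := by
  haveI := LKE_preservesLimitsOfShape_pair J Y
  haveI := LKE_preservesLimitsOfShape_pempty J Y
  exact PreservesFiniteProducts.of_preserves_binary_and_terminal _

end

section Adjunction

/-- Pointwise left Kan extension as a functor. -/
noncomputable def pLan : (B ⥤ Type u) ⥤ (A ⥤ Type u) where
  obj Z := J.pointwiseLeftKanExtension Z
  map {Z Z'} f := Functor.descOfIsLeftKanExtension _ (J.pointwiseLeftKanExtensionUnit Z) _
    (f ≫ J.pointwiseLeftKanExtensionUnit Z')
  map_id Z := by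
    apply Functor.hom_ext_of_isLeftKanExtension _ (J.pointwiseLeftKanExtensionUnit Z)
    simp
  map_comp {Z₁ Z₂ Z₃} f g := by
    apply Functor.hom_ext_of_isLeftKanExtension _ (J.pointwiseLeftKanExtensionUnit Z₁)
    simp

/-- The Kan extension adjunction for `pLan`. -/
noncomputable def pLanAdj : pLan J ⊣ (Functor.whiskeringLeft B A (Type u)).obj J :=
  Adjunction.mkOfHomEquiv
    { homEquiv := fun Z G =>
        Functor.homEquivOfIsLeftKanExtension _ (J.pointwiseLeftKanExtensionUnit Z) G
      homEquiv_naturality_left_symm := fun {Z₁ Z₂ G} f g => by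
        apply Functor.hom_ext_of_isLeftKanExtension _ (J.pointwiseLeftKanExtensionUnit Z₁)
        simp [pLan, Functor.homEquivOfIsLeftKanExtension_symm_apply]
        change J.pointwiseLeftKanExtensionUnit Z₁ ≫ Functor.whiskerLeft J
            (Functor.descOfIsLeftKanExtension _ (J.pointwiseLeftKanExtensionUnit Z₁) G (f ≫ g)) =
          f ≫ J.pointwiseLeftKanExtensionUnit Z₂ ≫ Functor.whiskerLeft J
            (Functor.descOfIsLeftKanExtension _ (J.pointwiseLeftKanExtensionUnit Z₂) G g)
        simp
      homEquiv_naturality_right := fun {Z G G'} f g => by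
        change J.pointwiseLeftKanExtensionUnit Z ≫ Functor.whiskerLeft J f ≫ Functor.whiskerLeft J g =
          (J.pointwiseLeftKanExtensionUnit Z ≫ Functor.whiskerLeft J f) ≫ Functor.whiskerLeft J g
        exact (Category.assoc _ _ _).symm }

end Adjunction

end Stmt14


theorem statement14 {B A : Type u} [SmallCategory B] [SmallCategory A]
    [HasFiniteProducts B] [HasFiniteProducts A]
    (J : B ⥤ A) [PreservesFiniteProducts J] :
    (∀ Y : B ⥤ Type u, PreservesFiniteProducts Y →
        PreservesFiniteProducts (J.pointwiseLeftKanExtension Y)) ∧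
      ∃ (Fr : FPAlg B ⥤ FPAlg A) (_ : Fr ⊣ restrictedPrecomp J),
        ∀ Y : FPAlg B, (Fr.obj Y).obj = J.pointwiseLeftKanExtension Y.obj := by
  constructor
  · intro Y hY
    haveI := hY
    exact Stmt14.LKE_preservesFiniteProducts J Y
  · refine ⟨ObjectProperty.lift _ (ObjectProperty.ι _ ⋙ Stmt14.pLan J) ?_, ?_, ?_⟩
    · intro X
      haveI := X.property
      exact Stmt14.LKE_preservesFiniteProducts J X.obj
    · exact (Stmt14.pLanAdj J).restrictFullyFaithful
        (ObjectProperty.fullyFaithfulι _) (ObjectProperty.fullyFaithfulι _)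
        (ObjectProperty.liftCompιIso _ _ _).symm
        (ObjectProperty.liftCompιIso _ _ _).symm
    · intro Y
      rfl
end

section
/- Let S be a skeleton of the category of finite sets (with objects the sets Fin n for n ∈ ℕ) and let J : S^op ⥤ S^op be the functor sending the object n to n + 1 and a morphism f^op (for f : k → n in S) to (f + id₁)^op, where f + id₁ : k + 1 → n + 1 acts as f on the first summand and as the identity on the added point. Then for every set X, the pointwise left Kan extension Lan_J(X^(−)) of the functor X^(−) : S^op ⥤ Set, m ↦ X^m, along J is naturally isomorphic to (X ⊕ 1)^(−), the corresponding power functor of the set X ⊕ 1 obtained from X by adding one point; in particular its value at the object 1 is in bijection with X ⊕ 1. -/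
/-!
STATEMENT 16: Let `S` be the skeleton of the category of finite sets with objects the sets
`Fin n`, and let `J : S^op ⥤ S^op` send `n` to `n + 1` and `f^op` (for `f : k → n`) to
`(f + id₁)^op`. Then for every set `X`, the pointwise left Kan extension
`Lan_J (X^(−))` of `X^(−) : S^op ⥤ Set` along `J` is naturally isomorphic to
`(X ⊕ 1)^(−)`; in particular its value at `1` is in bijection with `X ⊕ 1`.
-/

open CategoryTheory CategoryTheory.Limits Opposite

universe u

/-- The skeleton of the category of finite sets: objects are natural numbers `n`,
regarded as the sets `Fin n`; morphisms `m ⟶ n` are the functions `Fin m → Fin n`. -/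
abbrev FinSk : Type := ℕ

instance : Category FinSk where
  Hom m n := Fin m → Fin n
  id _ := id
  comp f g := g ∘ f
  id_comp _ := rfl
  comp_id _ := rfl
  assoc _ _ _ := rfl

/-- The map `f + id₁ : k + 1 → n + 1` acting as `f` on the first summand and as the
identity on the added point. -/
def plusOne {k n : FinSk} (f : k ⟶ n) : (k + 1 : FinSk) ⟶ (n + 1 : FinSk) :=
  fun i => Fin.lastCases (Fin.last n) (fun j => (f j).castSucc) i

/-- The functor `FinSk ⥤ FinSk` sending `n` to `n + 1` and `f` to `f + id₁`; the functor
`J` of the statement is its opposite `addOne.op : FinSk^op ⥤ FinSk^op`. -/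
def addOne : FinSk ⥤ FinSk where
  obj n := n + 1
  map f := plusOne f
  map_id n := by
    funext i
    induction i using Fin.lastCases with
    | last =>
        show plusOne (𝟙 n) (Fin.last n) = Fin.last n
        simp only [plusOne, Fin.lastCases_last]
    | cast j =>
        show plusOne (𝟙 n) j.castSucc = j.castSucc
        simp only [plusOne, Fin.lastCases_castSucc]
        rfl
  map_comp {k m n} f g := by
    funext i
    induction i using Fin.lastCases with
    | last =>
        show plusOne (f ≫ g) (Fin.last k) = plusOne g (plusOne f (Fin.last k))
        simp only [plusOne, Fin.lastCases_last]
    | cast j =>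
        show plusOne (f ≫ g) j.castSucc = plusOne g (plusOne f j.castSucc)
        simp only [plusOne, Fin.lastCases_castSucc]
        rfl

/-- The power functor `X^(−) : FinSk^op ⥤ Set`, `n ↦ X^n = (Fin n → X)`. -/
def finPow (X : Type u) : FinSkᵒᵖ ⥤ Type u where
  obj n := Fin (unop n) → X
  map f := TypeCat.ofHom (fun x => x ∘ f.unop)
  map_id n := by rfl
  map_comp f g := by rfl

namespace Statement16

variable {X : Type u}

/-- Extend `x : Fin m → X` to `Fin (m+1) → X ⊕ PUnit` by sending the last point to
the added point. -/
def ext1 {m : FinSk} (x : Fin m → X) : Fin (m + 1) → X ⊕ PUnit :=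
  Fin.lastCases (Sum.inr PUnit.unit) (fun j => Sum.inl (x j))

@[simp] lemma ext1_castSucc {m : FinSk} (x : Fin m → X) (j : Fin m) :
    ext1 x j.castSucc = Sum.inl (x j) := by
  simp [ext1]

@[simp] lemma ext1_last {m : FinSk} (x : Fin m → X) :
    ext1 x (Fin.last m) = Sum.inr PUnit.unit := by
  simp [ext1]

/-- The unit of the left Kan extension. -/
def unit (X : Type u) : finPow X ⟶ addOne.op ⋙ finPow (X ⊕ PUnit) where
  app n := TypeCat.ofHom (fun x => ext1 x)
  naturality {a b} f := by
    ext x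
    funext i
    induction i using Fin.lastCases with
    | last =>
        show ext1 (x ∘ f.unop) (Fin.last _) = ext1 x (plusOne f.unop (Fin.last _))
        simp [plusOne, ext1]
    | cast j =>
        show ext1 (x ∘ f.unop) j.castSucc = ext1 x (plusOne f.unop j.castSucc)
        simp [plusOne, ext1]
        rfl

variable (y : Fin (n : FinSk) → X ⊕ PUnit)

/-- The number of coordinates of `y` lying in `X`. -/
noncomputable def m₀ {n : FinSk} (y : Fin n → X ⊕ PUnit) : FinSk :=
  Fintype.card {i : Fin n // (y i).isLeft}

/-- An enumeration of the `X`-coordinates of `y`. -/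
noncomputable def enum {n : FinSk} (y : Fin n → X ⊕ PUnit) :
    {i : Fin n // (y i).isLeft} ≃ Fin (m₀ y) :=
  Fintype.equivFin _

/-- The canonical `x`-part of the factorization of `y`. -/
noncomputable def x₀ {n : FinSk} (y : Fin n → X ⊕ PUnit) : Fin (m₀ y) → X :=
  fun j => (y ((enum y).symm j).val).getLeft ((enum y).symm j).prop

/-- The canonical `g`-part of the factorization of `y`, as a morphism
`n ⟶ m₀ y + 1` of `FinSk`. -/
noncomputable def g₀ {n : FinSk} (y : Fin n → X ⊕ PUnit) : (n : FinSk) ⟶ (m₀ y + 1 : FinSk) :=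
  fun i => if h : (y i).isLeft then (enum y ⟨i, h⟩).castSucc else Fin.last (m₀ y)

lemma g₀_pos {n : FinSk} (y : Fin n → X ⊕ PUnit) (i : Fin n) (h : (y i).isLeft) :
    g₀ y i = (enum y ⟨i, h⟩).castSucc := dif_pos h

lemma g₀_neg {n : FinSk} (y : Fin n → X ⊕ PUnit) (i : Fin n) (h : ¬ (y i).isLeft) :
    g₀ y i = Fin.last (m₀ y) := dif_neg h

lemma fact₀ {n : FinSk} (y : Fin n → X ⊕ PUnit) : ext1 (x₀ y) ∘ g₀ y = y := by
  funext i
  by_cases h : (y i).isLeft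
  · rw [Function.comp, g₀_pos y i h, ext1_castSucc]
    show Sum.inl (x₀ y (enum y ⟨i, h⟩)) = y i
    simp only [x₀, Equiv.symm_apply_apply]
    obtain ⟨a, ha⟩ := Sum.isLeft_iff.mp h
    simp [ha]
  · rw [Function.comp, g₀_neg y i h, ext1_last]
    cases hyi : y i with
    | inl a => rw [hyi] at h; simp at h
    | inr u => rfl

/-- Any factorization of `y` through the unit gives the same value under any
cocone `β`. -/
lemma wd {n : FinSk} (y : Fin n → X ⊕ PUnit) (G : FinSkᵒᵖ ⥤ Type u)
    (β : finPow X ⟶ addOne.op ⋙ G) (m : FinSk) (x : Fin m → X)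
    (g : (n : FinSk) ⟶ (m + 1 : FinSk)) (hg : ext1 x ∘ g = y) :
    G.map g.op (β.app (op m) x) = G.map (g₀ y).op (β.app (op (m₀ y)) (x₀ y)) := by
  -- `g` never hits `last` on left coordinates
  have hne : ∀ i : Fin n, (y i).isLeft → g i ≠ Fin.last m := by
    intro i hi hgi
    have := congrFun hg i
    rw [Function.comp, hgi, ext1_last] at this
    rw [← this] at hi
    simp at hi
  -- the comparison map
  let h : (m₀ y : FinSk) ⟶ (m : FinSk) :=
    fun j => (g ((enum y).symm j).val).castPred (hne _ ((enum y).symm j).prop)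
  have hx : x ∘ h = x₀ y := by
    funext j
    have := congrFun hg ((enum y).symm j).val
    rw [Function.comp, ← Fin.castSucc_castPred (g ((enum y).symm j).val)
      (hne _ ((enum y).symm j).prop), ext1_castSucc] at this
    show x _ = x₀ y j
    simp only [x₀]
    obtain ⟨w, hget⟩ := Sum.eq_left_iff_getLeft_eq.mp this.symm
    exact hget.symm
  have hgfac : g₀ y ≫ plusOne h = g := by
    funext i
    by_cases hi : (y i).isLeft
    · show plusOne h (g₀ y i) = g i
      rw [g₀_pos y i hi]
      rw [show plusOne h (enum y ⟨i, hi⟩).castSucc = (h (enum y ⟨i, hi⟩)).castSucc by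
        simp [plusOne]]
      show ((g ((enum y).symm (enum y ⟨i, hi⟩)).val).castPred _).castSucc = g i
      rw [show ((enum y).symm (enum y ⟨i, hi⟩)) = ⟨i, hi⟩ from Equiv.symm_apply_apply _ _]
      exact Fin.castSucc_castPred _ _
    · show plusOne h (g₀ y i) = g i
      rw [g₀_neg y i hi]
      rw [show plusOne h (Fin.last (m₀ y)) = Fin.last m by simp [plusOne]]
      -- `g i = last` since `y i` is `inr`
      have := congrFun hg i
      rw [Function.comp] at this
      rcases Fin.eq_castSucc_or_eq_last (g i) with ⟨k, hk⟩ | hk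
      · rw [hk, ext1_castSucc] at this
        rw [← this] at hi
        simp at hi
      · exact hk.symm
  have step1 : G.map g.op (β.app (op m) x)
      = G.map ((Quiver.Hom.op (plusOne h)) ≫ (g₀ y).op) (β.app (op m) x) := by
    rw [← op_comp, hgfac]
  have step2 : G.map ((Quiver.Hom.op (plusOne h)) ≫ (g₀ y).op) (β.app (op m) x)
      = G.map (g₀ y).op (G.map (Quiver.Hom.op (plusOne h)) (β.app (op m) x)) := by
    rw [G.map_comp]; rfl
  have step3 : G.map (Quiver.Hom.op (plusOne h)) (β.app (op m) x)
      = β.app (op (m₀ y)) (x₀ y) := by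
    have hnat := ConcreteCategory.congr_hom (β.naturality (Quiver.Hom.op (h : (m₀ y : FinSk) ⟶ m))) x
    rw [← hx]
    exact hnat.symm
  rw [step1, step2, step3]

/-- The descent morphism out of `finPow (X ⊕ PUnit)`. -/
noncomputable def desc (G : FinSkᵒᵖ ⥤ Type u) (β : finPow X ⟶ addOne.op ⋙ G) :
    finPow (X ⊕ PUnit) ⟶ G where
  app n := TypeCat.ofHom (fun y => G.map (g₀ y).op (β.app (op (m₀ y)) (x₀ y)))
  naturality {a b} f := by
    ext y
    have h1 := wd (y ∘ f.unop) G β (m₀ y) (x₀ y) (f.unop ≫ g₀ y)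
      (funext fun i => congrFun (fact₀ y) (f.unop i))
    refine Eq.trans h1.symm ?_
    have : G.map (Quiver.Hom.op (f.unop ≫ g₀ y))
        = G.map ((g₀ y).op ≫ f) := rfl
    rw [this, G.map_comp]
    rfl

lemma desc_fac (G : FinSkᵒᵖ ⥤ Type u) (β : finPow X ⟶ addOne.op ⋙ G) :
    unit X ≫ CategoryTheory.Functor.whiskerLeft addOne.op (desc G β) = β := by
  ext n x
  have h1 := wd (ext1 x) G β (unop n) x (𝟙 _) (by funext i; rfl)
  refine Eq.trans h1.symm ?_
  have : (Quiver.Hom.op (𝟙 ((unop n + 1 : FinSk)))) = 𝟙 (op ((unop n : FinSk) + 1)) := rfl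
  rw [this, G.map_id]
  rfl

lemma desc_uniq (G : FinSkᵒᵖ ⥤ Type u) (β : finPow X ⟶ addOne.op ⋙ G)
    (δ : finPow (X ⊕ PUnit) ⟶ G)
    (hδ : unit X ≫ CategoryTheory.Functor.whiskerLeft addOne.op δ = β) : δ = desc G β := by
  ext n y
  have h2 : δ.app n ((finPow (X ⊕ PUnit)).map (g₀ y).op (ext1 (x₀ y)))
      = G.map (g₀ y).op (δ.app (op ((m₀ y : FinSk) + 1)) (ext1 (x₀ y))) :=
    ConcreteCategory.congr_hom (δ.naturality (g₀ y).op) (ext1 (x₀ y))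
  have h3 : δ.app (op ((m₀ y : FinSk) + 1)) (ext1 (x₀ y)) = β.app (op (m₀ y)) (x₀ y) :=
    ConcreteCategory.congr_hom (NatTrans.congr_app hδ (op (m₀ y))) (x₀ y)
  exact (congrArg (δ.app n) (fact₀ y).symm).trans (h2.trans (congrArg _ h3))

/-- `finPow (X ⊕ PUnit)` with the unit is a left Kan extension. -/
noncomputable def isUniversal (X : Type u) :
    (Functor.LeftExtension.mk (finPow (X ⊕ PUnit)) (unit X)).IsUniversal :=
  IsInitial.ofUniqueHom
    (fun Y => StructuredArrow.homMk (desc Y.right Y.hom) (desc_fac Y.right Y.hom))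
    (fun Y m => by
      apply StructuredArrow.hom_ext
      exact desc_uniq Y.right Y.hom m.right (StructuredArrow.w m))

instance (X : Type u) : (finPow (X ⊕ PUnit)).IsLeftKanExtension (unit X) where
  nonempty_isUniversal := ⟨isUniversal X⟩

end Statement16

open Statement16 in
theorem statement16 (X : Type u) :
    Nonempty (addOne.op.pointwiseLeftKanExtension (finPow X) ≅ finPow (X ⊕ PUnit)) ∧
      Nonempty
        ((addOne.op.pointwiseLeftKanExtension (finPow X)).obj (op (1 : FinSk)) ≃
          (X ⊕ PUnit)) := by
  let e : addOne.op.pointwiseLeftKanExtension (finPow X) ≅ finPow (X ⊕ PUnit) :=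
    Functor.leftKanExtensionUnique _
      (addOne.op.pointwiseLeftKanExtensionUnit (finPow X)) _ (unit X)
  refine ⟨⟨e⟩, ⟨?_⟩⟩
  exact ((((Functor.mapIso (evaluation FinSkᵒᵖ (Type u) |>.obj (op (1 : FinSk))) e)).toEquiv).trans
    ((Equiv.funUnique (Fin 1) (X ⊕ PUnit.{u + 1})))).trans
    (Equiv.sumCongr (Equiv.refl X) Equiv.punitEquivPUnit)
end
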